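/- arXiv:1903.01805 — 4 statements merged into one kernel-verified Lean document; each statement's English description precedes it below -/
import Mathlib

section
/- Let R be a CPG representation of a finite simple graph G in which exactly f endpoints of paths are free and which contains no grid point belonging to four or more paths. Then there are at least |E(G)| − 2|V(G)| + f contact points of R, each belonging to exactly three paths, such that the triangles of G formed by the three vertices whose paths meet at each of these points are pairwise edge-disjoint. -/
/-! ## Grid paths and CPG representations -/

/-- Two grid points of `ℤ × ℤ` at L¹-distance 1 (i.e. joined by a unit grid segment). -/
def GridStep (p q : ℤ × ℤ) : Prop :=
  (p.1 - q.1).natAbs + (p.2 - q.2).natAbs = 1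

/-- A grid path: a sequence of at least two grid points, consecutive points at distance 1,
with no repeated grid point (so the traced curve neither crosses nor retraces itself). -/
structure GridPath where
  pts : List (ℤ × ℤ)
  two_le_length : 2 ≤ pts.length
  step : pts.Chain' GridStep
  nodup : pts.Nodup

namespace GridPath

theorem ne_nil (P : GridPath) : P.pts ≠ [] := by
  intro h
  have h2 := P.two_le_length
  rw [h] at h2
  simp at h2

/-- The set of grid points of a grid path. -/
def toSet (P : GridPath) : Set (ℤ × ℤ) := {p | p ∈ P.pts}

/-- The first extreme point of a grid path. -/
def first (P : GridPath) : ℤ × ℤ := P.pts.head P.ne_nil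

/-- The second extreme point of a grid path. -/
def last (P : GridPath) : ℤ × ℤ := P.pts.getLast P.ne_nil

/-- `p` is an endpoint (extreme point) of the grid path `P`. -/
def IsEndpoint (P : GridPath) (p : ℤ × ℤ) : Prop := p = P.first ∨ p = P.last

/-- `p` is an interior grid point of `P`: it lies on `P` but is not an endpoint. -/
def IsInterior (P : GridPath) (p : ℤ × ℤ) : Prop := p ∈ P.toSet ∧ ¬ P.IsEndpoint p

/-- `p` is a bend of `P`: an interior grid point at which `P` turns 90 degrees. -/
def IsBend (P : GridPath) (p : ℤ × ℤ) : Prop :=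
  ∃ a c : ℤ × ℤ, [a, p, c] <:+: P.pts ∧ a.1 ≠ c.1 ∧ a.2 ≠ c.2

/-- The set of bend points of `P`. -/
def bendSet (P : GridPath) : Set (ℤ × ℤ) := {p | P.IsBend p}

/-- `P` has at most `k` bends. -/
def BendsAtMost (P : GridPath) (k : ℕ) : Prop := P.bendSet.ncard ≤ k

end GridPath

/-- `p` and `q` are consecutive grid points of the list `l` (in either order);
equivalently, the path traced by `l` uses the unit grid segment joining `p` and `q`. -/
def ConsecIn (l : List (ℤ × ℤ)) (p q : ℤ × ℤ) : Prop :=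
  [p, q] <:+: l ∨ [q, p] <:+: l

/-- A CPG representation of a simple graph `G`: a family of pairwise interiorly disjoint
grid paths, one for each vertex, such that two distinct vertices are adjacent iff the
corresponding paths have a common point. -/
structure CPGRep {V : Type*} (G : SimpleGraph V) where
  path : V → GridPath
  interiorly_disjoint : ∀ u v : V, u ≠ v → ∀ p : ℤ × ℤ,
    p ∈ (path u).toSet → p ∈ (path v).toSet →
    (path u).IsEndpoint p ∨ (path v).IsEndpoint p
  no_shared_segment : ∀ u v : V, u ≠ v → ∀ p q : ℤ × ℤ,
    ConsecIn (path u).pts p q → ¬ ConsecIn (path v).pts p q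
  adj_iff : ∀ u v : V, u ≠ v →
    (G.Adj u v ↔ ∃ p : ℤ × ℤ, p ∈ (path u).toSet ∧ p ∈ (path v).toSet)

namespace CPGRep

variable {V : Type*} {G : SimpleGraph V}

/-- A `k`-bend CPG representation: every path has at most `k` bends. -/
def BendsAtMost (R : CPGRep G) (k : ℕ) : Prop :=
  ∀ u : V, (R.path u).BendsAtMost k

/-- `p` is a free endpoint of the path of `u`: an endpoint of `R.path u`
belonging to no other path of the representation. -/
def FreeEndpoint (R : CPGRep G) (u : V) (p : ℤ × ℤ) : Prop :=
  (R.path u).IsEndpoint p ∧ ∀ v : V, v ≠ u → p ∉ (R.path v).toSet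

end CPGRep

/-- A graph is CPG if it admits a CPG representation. -/
def IsCPG {V : Type*} (G : SimpleGraph V) : Prop := Nonempty (CPGRep G)

/-- A graph is `B_k`-CPG if it admits a CPG representation in which every path
has at most `k` bends. -/
def IsBkCPG {V : Type*} (G : SimpleGraph V) (k : ℕ) : Prop :=
  ∃ R : CPGRep G, R.BendsAtMost k


private lemma head_ne_getLast_aux {α : Type*} {l : List α} (h2 : 2 ≤ l.length)
    (hn : l.Nodup) (hne : l ≠ []) : l.head hne ≠ l.getLast hne := by
  match l with
  | [] => simp at hne
  | [a] => simp at h2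
  | a :: b :: t =>
    simp only [List.head_cons]
    have hmem : (a :: b :: t).getLast (by simp) ∈ b :: t := by
      rw [List.getLast_cons (by simp)]
      exact List.getLast_mem _
    intro h
    rw [← h] at hmem
    exact (List.nodup_cons.mp hn).1 hmem

private lemma GridPath.first_ne_last (P : GridPath) : P.first ≠ P.last :=
  head_ne_getLast_aux P.two_le_length P.nodup P.ne_nil

private lemma GridPath.mem_of_isEndpoint (P : GridPath) {p : ℤ × ℤ}
    (h : P.IsEndpoint p) : p ∈ P.toSet := by
  rcases h with h | h <;> subst h
  · exact List.head_mem _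
  · exact List.getLast_mem _

private lemma sym2_cases {α : Type*} (e : Sym2 α) : ∃ a b, e = s(a, b) := by
  induction e using Sym2.ind with | _ a b => exact ⟨a, b, rfl⟩

private lemma sym2_mem_of_three {α : Type*} {a b c x y : α}
    (hx : x = a ∨ x = b ∨ x = c) (hy : y = a ∨ y = b ∨ y = c) (hxy : x ≠ y) :
    s(x, y) = s(a, b) ∨ s(x, y) = s(a, c) ∨ s(x, y) = s(b, c) := by
  rcases hx with rfl | rfl | rfl <;> rcases hy with rfl | rfl | rfl <;>
    simp_all [Sym2.eq_iff]

/-- Lemma (free endpoints force triangle contact points): let `R` be a CPG representation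
of a finite graph `G` with exactly `f` free endpoints of paths and no grid point lying on
four or more paths. Then there is a set `S` of at least `|E(G)| − 2|V(G)| + f` grid
points, each belonging to exactly three paths (whose three vertices are pairwise
adjacent, i.e. form a triangle of `G`), such that the triangles of `G` arising from
distinct points of `S` are pairwise edge-disjoint (no two distinct vertices lie in two of
these triple sets). -/
theorem free_endpoints_triangle_contact_points
    (V : Type) [Fintype V] (G : SimpleGraph V) (R : CPGRep G) (f : ℕ)
    (hf : f = Nat.card {q : V × (ℤ × ℤ) // R.FreeEndpoint q.1 q.2})
    (h4 : ∀ p : ℤ × ℤ, {u : V | p ∈ (R.path u).toSet}.ncard ≤ 3) :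
    ∃ S : Set (ℤ × ℤ),
      (G.edgeSet.ncard : ℤ) - 2 * (Fintype.card V : ℤ) + (f : ℤ) ≤ (S.ncard : ℤ) ∧
      (∀ p ∈ S, {u : V | p ∈ (R.path u).toSet}.ncard = 3 ∧
        ∀ u v : V, u ≠ v → p ∈ (R.path u).toSet → p ∈ (R.path v).toSet → G.Adj u v) ∧
      (∀ p ∈ S, ∀ q ∈ S, p ≠ q → ∀ u v : V, u ≠ v →
        ¬(p ∈ (R.path u).toSet ∧ p ∈ (R.path v).toSet ∧
          q ∈ (R.path u).toSet ∧ q ∈ (R.path v).toSet)) := by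
  classical
  -- choose a witness contact point for each edge
  have hex : ∀ e : Sym2 V, ∃ p : ℤ × ℤ, e ∈ G.edgeSet → ∀ u ∈ e, p ∈ (R.path u).toSet := by
    intro e
    by_cases he : e ∈ G.edgeSet
    · obtain ⟨a, b, rfl⟩ := sym2_cases e
      rw [SimpleGraph.mem_edgeSet] at he
      obtain ⟨p, hpa, hpb⟩ := (R.adj_iff a b he.ne).mp he
      exact ⟨p, fun _ u hu => by rcases Sym2.mem_iff.mp hu with rfl | rfl <;> assumption⟩
    · exact ⟨(0, 0), fun h => absurd h he⟩
  choose w hw using hex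
  set EF : Finset (Sym2 V) := G.edgeSet.toFinite.toFinset with hEFdef
  have hEF : ∀ e, e ∈ EF ↔ e ∈ G.edgeSet := fun e => Set.Finite.mem_toFinset _
  set P : Finset (ℤ × ℤ) := EF.image w with hPdef
  set Ep : ℤ × ℤ → Finset (Sym2 V) := fun p => EF.filter (fun e => w e = p) with hEpdef
  set N : ℤ × ℤ → Finset V :=
    fun p => Finset.univ.filter (fun u => p ∈ (R.path u).toSet) with hNdef
  have hNmem : ∀ p u, u ∈ N p ↔ p ∈ (R.path u).toSet := by
    intro p u; rw [hNdef]; simp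
  set Endp : ℤ × ℤ → Finset V :=
    fun p => (N p).filter (fun u => (R.path u).IsEndpoint p) with hEndpdef
  have hN3 : ∀ p, (N p).card ≤ 3 := by
    intro p
    have h := h4 p
    have : {u : V | p ∈ (R.path u).toSet} = ↑(N p) := by
      ext u; simp [hNmem]
    rwa [this, Set.ncard_coe_finset] at h
  -- edge endpoints lie in N p
  have hEpmem : ∀ p e, e ∈ Ep p ↔ e ∈ EF ∧ w e = p := by
    intro p e; rw [hEpdef]; simp
  have hEpN : ∀ p, ∀ e ∈ Ep p, ∀ u ∈ e, u ∈ N p := by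
    intro p e he u hu
    obtain ⟨h1, h2⟩ := (hEpmem p e).mp he
    have := hw e ((hEF e).mp h1) u hu
    rw [h2] at this
    exact (hNmem p u).mpr this
  have hEdiag : ∀ e ∈ EF, ∀ a b : V, e = s(a, b) → a ≠ b := by
    intro e he a b hab
    subst hab
    exact ((SimpleGraph.mem_edgeSet G).mp ((hEF _).mp he)).ne
  -- at most one path is interior at p
  have hEndp1 : ∀ p, (N p).card ≤ (Endp p).card + 1 := by
    intro p
    have hsplit := Finset.card_filter_add_card_filter_not
      (s := N p) (p := fun u => (R.path u).IsEndpoint p)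
    have hle : ((N p).filter (fun u => ¬ (R.path u).IsEndpoint p)).card ≤ 1 := by
      refine Finset.card_le_one.mpr ?_
      intro u hu v hv
      by_contra hne
      rw [Finset.mem_filter] at hu hv
      rcases R.interiorly_disjoint u v hne p ((hNmem p u).mp hu.1) ((hNmem p v).mp hv.1)
        with h | h
      · exact hu.2 h
      · exact hv.2 h
    simp only [hEndpdef]
    omega
  -- nonempty fiber gives at least 2 paths through p
  have hn2 : ∀ p, (Ep p).Nonempty → 2 ≤ (N p).card := by
    intro p ⟨e, he⟩
    obtain ⟨a, b, rfl⟩ := sym2_cases e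
    have hab : a ≠ b := hEdiag _ ((hEpmem p _).mp he).1 a b rfl
    have ha : a ∈ N p := hEpN p _ he a (by simp)
    have hb : b ∈ N p := hEpN p _ he b (by simp)
    exact Finset.one_lt_card.mpr ⟨a, ha, b, hb, hab⟩
  -- two distinct fiber edges force 3 paths through p
  have hn3 : ∀ p, 2 ≤ (Ep p).card → (N p).card = 3 := by
    intro p hp
    by_contra hcon
    have hle2 : (N p).card ≤ 2 := by
      have := hN3 p
      have h2 := hn2 p (Finset.card_pos.mp (by omega))
      omega
    obtain ⟨e, he, e', he', hee⟩ := Finset.one_lt_card.mp hp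
    obtain ⟨a, b, rfl⟩ := sym2_cases e
    obtain ⟨c, d, rfl⟩ := sym2_cases e'
    have hab : a ≠ b := hEdiag _ ((hEpmem p _).mp he).1 a b rfl
    have hcd : c ≠ d := hEdiag _ ((hEpmem p _).mp he').1 c d rfl
    have ha : a ∈ N p := hEpN p _ he a (by simp)
    have hb : b ∈ N p := hEpN p _ he b (by simp)
    have hc : c ∈ N p := hEpN p _ he' c (by simp)
    have hd : d ∈ N p := hEpN p _ he' d (by simp)
    have hNeq : N p = {a, b} := by
      refine (Finset.eq_of_subset_of_card_le ?_ ?_).symm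
      · intro x hx
        rcases Finset.mem_insert.mp hx with rfl | hx
        · exact ha
        · rw [Finset.mem_singleton] at hx; subst hx; exact hb
      · rw [Finset.card_pair hab] at *; omega
    rw [hNeq, Finset.mem_insert, Finset.mem_singleton] at hc hd
    apply hee
    rcases hc with rfl | rfl <;> rcases hd with rfl | rfl
    · exact absurd rfl hcd
    · rfl
    · exact Sym2.eq_swap
    · exact absurd rfl hcd
  -- structure at a triple point
  have hstruct : ∀ p, (N p).card = 3 → (Ep p).card ≤ 3 ∧
      (3 ≤ (Ep p).card → ∀ u v : V, u ≠ v → u ∈ N p → v ∈ N p → s(u, v) ∈ Ep p) := by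
    intro p hp
    obtain ⟨a, b, c, hab, hac, hbc, hN⟩ := Finset.card_eq_three.mp hp
    set T : Finset (Sym2 V) := {s(a, b), s(a, c), s(b, c)} with hT
    have hmemN : ∀ x : V, x ∈ N p → (x = a ∨ x = b ∨ x = c) := by
      intro x hx
      rw [hN] at hx
      simpa using hx
    have hsub : Ep p ⊆ T := by
      intro e he
      obtain ⟨x, y, rfl⟩ := sym2_cases e
      have hxy : x ≠ y := hEdiag _ ((hEpmem p _).mp he).1 x y rfl
      have hx := hmemN x (hEpN p _ he x (by simp))
      have hy := hmemN y (hEpN p _ he y (by simp))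
      rcases sym2_mem_of_three hx hy hxy with h | h | h <;> rw [hT] <;> simp [h]
    have hTcard : T.card ≤ 3 := by
      rw [hT]
      apply (Finset.card_insert_le _ _).trans
      apply Nat.succ_le_succ
      apply (Finset.card_insert_le _ _).trans
      simp
    refine ⟨(Finset.card_le_card hsub).trans hTcard, fun h3 u v huv hu hv => ?_⟩
    have hEq : Ep p = T := Finset.eq_of_subset_of_card_le hsub (by omega)
    rw [hEq, hT]
    rcases sym2_mem_of_three (hmemN u hu) (hmemN v hv) huv with h | h | h <;> simp [h]
  set Sf : Finset (ℤ × ℤ) := P.filter (fun p => 3 ≤ (Ep p).card) with hSfdef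
  -- the per-point inequality
  have hkey : ∀ p ∈ P, (Ep p).card ≤ (Endp p).card + (if p ∈ Sf then 1 else 0) := by
    intro p hp
    have hne : (Ep p).Nonempty := by
      obtain ⟨e, he, hwe⟩ := Finset.mem_image.mp hp
      exact ⟨e, (hEpmem p e).mpr ⟨he, hwe⟩⟩
    have h2 := hn2 p hne
    have h1 := hEndp1 p
    by_cases hcase : 3 ≤ (Ep p).card
    · have hmem : p ∈ Sf := by rw [hSfdef]; exact Finset.mem_filter.mpr ⟨hp, hcase⟩
      rw [if_pos hmem]
      have hN3' := hn3 p (by omega)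
      have := (hstruct p hN3').1
      omega
    · rw [if_neg (by rw [hSfdef]; simp [hcase])]
      by_cases hc2 : 2 ≤ (Ep p).card
      · have := hn3 p hc2
        omega
      · omega
  -- endpoint-pair bookkeeping
  set A : Finset (V × (ℤ × ℤ)) := Finset.univ.biUnion
    (fun u => {(u, (R.path u).first), (u, (R.path u).last)}) with hAdef
  have hAmem : ∀ (u : V) (p : ℤ × ℤ), (u, p) ∈ A ↔ (R.path u).IsEndpoint p := by
    intro u p
    rw [hAdef]
    simp only [Finset.mem_biUnion, Finset.mem_univ, true_and, Finset.mem_insert,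
      Finset.mem_singleton, Prod.mk.injEq]
    constructor
    · rintro ⟨v, (⟨rfl, rfl⟩ | ⟨rfl, rfl⟩)⟩
      · exact Or.inl rfl
      · exact Or.inr rfl
    · rintro (rfl | rfl)
      · exact ⟨u, Or.inl ⟨rfl, rfl⟩⟩
      · exact ⟨u, Or.inr ⟨rfl, rfl⟩⟩
  have hAcard : A.card = 2 * Fintype.card V := by
    rw [hAdef, Finset.card_biUnion]
    · rw [Finset.sum_congr rfl (fun u _ => Finset.card_pair
        (fun h => (R.path u).first_ne_last (congrArg Prod.snd h)))]
      simp [mul_comm]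
    · intro u _ v _ huv
      refine Finset.disjoint_left.mpr ?_
      intro x hx hx'
      simp only [Finset.mem_insert, Finset.mem_singleton] at hx hx'
      apply huv
      rcases hx with rfl | rfl <;> rcases hx' with h | h <;> exact congrArg Prod.fst h
  set Fr : Finset (V × (ℤ × ℤ)) := A.filter (fun q => R.FreeEndpoint q.1 q.2) with hFrdef
  set NF : Finset (V × (ℤ × ℤ)) := A.filter (fun q => ¬ R.FreeEndpoint q.1 q.2) with hNFdef
  have hsplitA : Fr.card + NF.card = A.card := by
    rw [hFrdef, hNFdef]
    exact Finset.card_filter_add_card_filter_not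
      (s := A) (p := fun q => R.FreeEndpoint q.1 q.2)
  have hfFr : f = Fr.card := by
    rw [hf]
    have hseteq : {q : V × (ℤ × ℤ) | R.FreeEndpoint q.1 q.2} = ↑Fr := by
      ext ⟨u, p⟩
      simp only [Set.mem_setOf_eq, hFrdef, Finset.coe_filter, Set.mem_setOf_eq]
      exact ⟨fun h => ⟨(hAmem u p).mpr h.1, h⟩, fun h => h.2⟩
    have h2 : Nat.card {q : V × (ℤ × ℤ) // R.FreeEndpoint q.1 q.2}
        = {q : V × (ℤ × ℤ) | R.FreeEndpoint q.1 q.2}.ncard :=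
      Nat.card_coe_set_eq {q : V × (ℤ × ℤ) | R.FreeEndpoint q.1 q.2}
    rw [h2, hseteq, Set.ncard_coe_finset]
  -- sum over endpoints injects into non-free endpoint pairs
  set B : Finset (V × (ℤ × ℤ)) :=
    P.biUnion (fun p => (Endp p).image (fun u => (u, p))) with hBdef
  have hBcard : ∑ p ∈ P, (Endp p).card = B.card := by
    rw [hBdef, Finset.card_biUnion]
    · exact Finset.sum_congr rfl fun p _ =>
        (Finset.card_image_of_injective _ (fun a b h => (Prod.mk.injEq _ _ _ _ ▸ h).1)).symm
    · intro p _ q _ hpq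
      refine Finset.disjoint_left.mpr ?_
      intro x hx hx'
      obtain ⟨a, _, rfl⟩ := Finset.mem_image.mp hx
      obtain ⟨b, _, h⟩ := Finset.mem_image.mp hx'
      exact hpq (congrArg Prod.snd h).symm
  have hBNF : B ⊆ NF := by
    intro x hx
    rw [hBdef] at hx
    obtain ⟨p, hp, hx⟩ := Finset.mem_biUnion.mp hx
    obtain ⟨u, hu, rfl⟩ := Finset.mem_image.mp hx
    have huE : (R.path u).IsEndpoint p := by
      simp only [hEndpdef, Finset.mem_filter] at hu
      exact hu.2
    rw [hNFdef, Finset.mem_filter]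
    refine ⟨(hAmem u p).mpr huE, ?_⟩
    intro hfree
    obtain ⟨e, he, hwe⟩ := Finset.mem_image.mp hp
    obtain ⟨a, b, rfl⟩ := sym2_cases e
    have hab : a ≠ b := hEdiag _ he a b rfl
    have ha : p ∈ (R.path a).toSet := by
      have := hw _ ((hEF _).mp he) a (by simp); rwa [hwe] at this
    have hb : p ∈ (R.path b).toSet := by
      have := hw _ ((hEF _).mp he) b (by simp); rwa [hwe] at this
    by_cases hau : a = u
    · subst hau
      exact hfree.2 b (fun h => hab h.symm) hb
    · exact hfree.2 a hau ha
  -- main counting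
  have hcount : EF.card ≤ NF.card + Sf.card := by
    have hfib : EF.card = ∑ p ∈ P, (Ep p).card := by
      rw [hEpdef, hPdef]
      exact Finset.card_eq_sum_card_fiberwise (fun e he => Finset.mem_image_of_mem w he)
    have hsum1 : ∑ p ∈ P, (Ep p).card
        ≤ ∑ p ∈ P, ((Endp p).card + if p ∈ Sf then 1 else 0) :=
      Finset.sum_le_sum hkey
    have hsum2 : ∑ p ∈ P, (if p ∈ Sf then 1 else 0) = Sf.card := by
      rw [Finset.sum_ite_mem, Finset.inter_eq_right.mpr (by rw [hSfdef]; exact Finset.filter_subset _ _)]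
      simp
    rw [hfib]
    calc ∑ p ∈ P, (Ep p).card
        ≤ ∑ p ∈ P, ((Endp p).card + if p ∈ Sf then 1 else 0) := hsum1
      _ = (∑ p ∈ P, (Endp p).card) + ∑ p ∈ P, (if p ∈ Sf then 1 else 0) :=
          Finset.sum_add_distrib
      _ = B.card + Sf.card := by rw [hBcard, hsum2]
      _ ≤ NF.card + Sf.card := by
          exact Nat.add_le_add_right (Finset.card_le_card hBNF) _
  have hEcard : G.edgeSet.ncard = EF.card := by
    rw [hEFdef, ← Set.ncard_coe_finset, Set.Finite.coe_toFinset]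
  -- facts about points of Sf
  have hSfP : ∀ p ∈ Sf, p ∈ P ∧ 3 ≤ (Ep p).card := fun p hp => by
    rw [hSfdef] at hp; exact Finset.mem_filter.mp hp
  have hSfN : ∀ p ∈ Sf, (N p).card = 3 := fun p hp => hn3 p (by have := (hSfP p hp).2; omega)
  have hSfall : ∀ p ∈ Sf, ∀ u v : V, u ≠ v → p ∈ (R.path u).toSet → p ∈ (R.path v).toSet →
      w s(u, v) = p := by
    intro p hp u v huv hu hv
    have h := (hstruct p (hSfN p hp)).2 (hSfP p hp).2 u v huv
      ((hNmem p u).mpr hu) ((hNmem p v).mpr hv)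
    exact ((hEpmem p _).mp h).2
  refine ⟨↑Sf, ?_, ?_, ?_⟩
  · rw [Set.ncard_coe_finset, hEcard, hfFr]
    omega
  · intro p hp
    rw [Finset.mem_coe] at hp
    constructor
    · have : {u : V | p ∈ (R.path u).toSet} = ↑(N p) := by ext u; simp [hNmem]
      rw [this, Set.ncard_coe_finset]
      exact hSfN p hp
    · intro u v huv hu hv
      exact (R.adj_iff u v huv).mpr ⟨p, hu, hv⟩
  · rintro p hp q hq hpq u v huv ⟨hpu, hpv, hqu, hqv⟩
    rw [Finset.mem_coe] at hp hq
    have h1 := hSfall p hp u v huv hpu hpv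
    have h2 := hSfall q hq u v huv hqu hqv
    exact hpq (h1 ▸ h2 ▸ rfl)
end

section
/- Let G be a finite simple graph containing no K_4 (no four pairwise adjacent vertices) such that every family of pairwise edge-disjoint triangles of G has at most |E(G)| − 2|V(G)| members. Then in every CPG representation of G no path has a free endpoint. -/
section AuxCPG
set_option linter.unusedSectionVars false

variable {V : Type} [Fintype V] {G : SimpleGraph V}

open scoped Classical in
/-- A witness common point for an edge. -/
noncomputable def CPGRep.W (R : CPGRep G) (e : Sym2 V) : ℤ × ℤ :=
  if h : ∃ pt, ∀ v ∈ e, pt ∈ (R.path v).toSet then h.choose else 0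

theorem CPGRep.W_spec (R : CPGRep G) {e : Sym2 V} (he : e ∈ G.edgeSet) :
    ∀ v ∈ e, R.W e ∈ (R.path v).toSet := by
  classical
  have h : ∃ pt, ∀ v ∈ e, pt ∈ (R.path v).toSet := by
    induction e with
    | _ a b =>
      rw [SimpleGraph.mem_edgeSet] at he
      obtain ⟨pt, h1, h2⟩ := (R.adj_iff a b he.ne).mp he
      refine ⟨pt, ?_⟩
      intro v hv
      rw [Sym2.mem_iff] at hv
      rcases hv with rfl | rfl <;> assumption
  rw [CPGRep.W]
  rw [dif_pos h]
  exact h.choose_spec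

/-- The endpoint selector. -/
noncomputable def CPGRep.EP (R : CPGRep G) (vb : V × Bool) : ℤ × ℤ :=
  if vb.2 then (R.path vb.1).last else (R.path vb.1).first

theorem GridPath.first_mem (P : GridPath) : P.first ∈ P.toSet := List.head_mem _

theorem GridPath.last_mem (P : GridPath) : P.last ∈ P.toSet := List.getLast_mem _

theorem CPGRep.EP_mem (R : CPGRep G) (vb : V × Bool) :
    R.EP vb ∈ (R.path vb.1).toSet := by
  rw [CPGRep.EP]
  split
  · exact (R.path vb.1).last_mem
  · exact (R.path vb.1).first_mem

theorem CPGRep.exists_EP (R : CPGRep G) {v : V} {q : ℤ × ℤ}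
    (h : (R.path v).IsEndpoint q) : ∃ b : Bool, R.EP (v, b) = q := by
  rcases h with h | h
  · exact ⟨false, h.symm⟩
  · exact ⟨true, h.symm⟩

end AuxCPG

/-- Let `G` be a finite simple graph with no `K_4` such that every family of pairwise
edge-disjoint triangles of `G` has at most `|E(G)| − 2|V(G)|` members. Then in every CPG
representation of `G` no path has a free endpoint. -/
theorem no_free_endpoint_of_few_edge_disjoint_triangles
    (V : Type) [Fintype V] (G : SimpleGraph V)
    (hK4 : G.CliqueFree 4)
    (htri : ∀ F : Set (Finset V),
      (∀ t ∈ F, t.card = 3 ∧ ∀ u ∈ t, ∀ v ∈ t, u ≠ v → G.Adj u v) →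
      (∀ t ∈ F, ∀ t' ∈ F, t ≠ t' → ∀ u v : V, u ≠ v →
        ¬(u ∈ t ∧ v ∈ t ∧ u ∈ t' ∧ v ∈ t')) →
      (F.ncard : ℤ) ≤ (G.edgeSet.ncard : ℤ) - 2 * (Fintype.card V : ℤ)) :
    ∀ (R : CPGRep G) (u : V) (p : ℤ × ℤ), (R.path u).IsEndpoint p →
      ∃ v : V, v ≠ u ∧ p ∈ (R.path v).toSet := by
  classical
  intro R u p hp
  by_contra hcon
  push_neg at hcon
  set n := Fintype.card V with hn
  set S : ℤ × ℤ → Finset V := fun q => Finset.univ.filter (fun v => q ∈ (R.path v).toSet)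
    with hSdef
  set fib : ℤ × ℤ → Finset (Sym2 V) := fun q => G.edgeFinset.filter (fun e => R.W e = q)
    with hfibdef
  set Q : Finset (ℤ × ℤ) := G.edgeFinset.image R.W with hQdef
  set ends : ℤ × ℤ → Finset (V × Bool) := fun q => Finset.univ.filter (fun vb => R.EP vb = q)
    with hendsdef
  have hSmem' : ∀ (q : ℤ × ℤ) (v : V), v ∈ S q ↔ q ∈ (R.path v).toSet := by
    intro q v; simp [hSdef]
  have hSmem : ∀ (q : ℤ × ℤ) (e : Sym2 V), e ∈ fib q → ∀ v ∈ e, v ∈ S q := by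
    intro q e he v hv
    simp only [hfibdef, Finset.mem_filter] at he
    rw [hSmem']
    rw [← he.2]
    exact R.W_spec (SimpleGraph.mem_edgeFinset.mp he.1) v hv
  have hfib_two : ∀ (q : ℤ × ℤ), ∀ e ∈ fib q, ∃ a b : V, a ≠ b ∧ e = s(a, b) := by
    intro q e he
    simp only [hfibdef, Finset.mem_filter, SimpleGraph.mem_edgeFinset] at he
    obtain ⟨he1, -⟩ := he
    revert he1
    induction e with
    | _ a b => exact fun he1 => ⟨a, b, ((SimpleGraph.mem_edgeSet G).mp he1).ne, rfl⟩
  have hclique : ∀ (q : ℤ × ℤ), ∀ x ∈ S q, ∀ y ∈ S q, x ≠ y → G.Adj x y := by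
    intro q x hx y hy hxy
    exact (R.adj_iff x y hxy).mpr ⟨q, (hSmem' q x).mp hx, (hSmem' q y).mp hy⟩
  have hS3 : ∀ q : ℤ × ℤ, (S q).card ≤ 3 := by
    intro q
    by_contra hle
    push_neg at hle
    obtain ⟨t, hts, htc⟩ := Finset.exists_subset_card_eq (by omega : 4 ≤ (S q).card)
    exact hK4 t ⟨fun x hx y hy hxy =>
      hclique q x (hts (Finset.mem_coe.mp hx)) y (hts (Finset.mem_coe.mp hy)) hxy, htc⟩
  have hSQ2 : ∀ q ∈ Q, 2 ≤ (S q).card := by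
    intro q hq
    rw [hQdef, Finset.mem_image] at hq
    obtain ⟨e, he, hWe⟩ := hq
    have hef : e ∈ fib q := by simp only [hfibdef, Finset.mem_filter]; exact ⟨he, hWe⟩
    obtain ⟨a, b, hab, rfl⟩ := hfib_two q e hef
    have ha : a ∈ S q := hSmem q _ hef a (by simp)
    have hb : b ∈ S q := hSmem q _ hef b (by simp)
    calc 2 = ({a, b} : Finset V).card := by
            rw [Finset.card_insert_of_notMem (by simpa using hab), Finset.card_singleton]
      _ ≤ (S q).card := Finset.card_le_card (by
            intro x hx
            rcases Finset.mem_insert.mp hx with rfl | hx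
            · exact ha
            · rw [Finset.mem_singleton.mp hx]; exact hb)
  have hends_lb : ∀ q : ℤ × ℤ, (S q).card ≤ (ends q).card + 1 := by
    intro q
    have hsplit := Finset.card_filter_add_card_filter_not
      (s := S q) (p := fun v => (R.path v).IsEndpoint q)
    have hB : ((S q).filter (fun v => ¬ (R.path v).IsEndpoint q)).card ≤ 1 := by
      rw [Finset.card_le_one]
      intro a ha b hb
      by_contra hab
      simp only [Finset.mem_filter] at ha hb
      rcases R.interiorly_disjoint a b hab q ((hSmem' q a).mp ha.1) ((hSmem' q b).mp hb.1)
        with h | h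
      · exact ha.2 h
      · exact hb.2 h
    have hA : ((S q).filter (fun v => (R.path v).IsEndpoint q)).card ≤ (ends q).card := by
      apply Finset.card_le_card_of_injOn
        (fun v => (v, if q = (R.path v).first then false else true))
      · intro v hv
        simp only [Finset.mem_coe, Finset.mem_filter] at hv
        simp only [Finset.mem_coe, hendsdef, Finset.mem_filter, Finset.mem_univ, true_and, CPGRep.EP]
        by_cases hqf : q = (R.path v).first
        · simp [hqf]
        · simp only [hqf, if_false]
          rcases hv.2 with h | h
          · exact absurd h hqf
          · simp [h]
      · intro v _ w _ hvw
        exact congrArg Prod.fst hvw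
    omega
  have hfib_sub2 : ∀ (q : ℤ × ℤ) (a b : V), S q = {a, b} → fib q ⊆ {s(a, b)} := by
    intro q a b hS e he
    obtain ⟨x, y, hxy, rfl⟩ := hfib_two q e he
    have hx : x ∈ S q := hSmem q _ he x (by simp)
    have hy : y ∈ S q := hSmem q _ he y (by simp)
    rw [hS] at hx hy
    simp only [Finset.mem_insert, Finset.mem_singleton] at hx hy ⊢
    rcases hx with rfl | rfl <;> rcases hy with rfl | rfl <;>
      first
        | exact absurd rfl hxy
        | simp [Sym2.eq_iff]
  have hfib_sub3 : ∀ (q : ℤ × ℤ) (a b c : V), S q = {a, b, c} →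
      fib q ⊆ {s(a, b), s(a, c), s(b, c)} := by
    intro q a b c hS e he
    obtain ⟨x, y, hxy, rfl⟩ := hfib_two q e he
    have hx : x ∈ S q := hSmem q _ he x (by simp)
    have hy : y ∈ S q := hSmem q _ he y (by simp)
    rw [hS] at hx hy
    simp only [Finset.mem_insert, Finset.mem_singleton] at hx hy ⊢
    rcases hx with rfl | rfl | rfl <;> rcases hy with rfl | rfl | rfl <;>
      first
        | exact absurd rfl hxy
        | simp [Sym2.eq_iff]
  have key : ∀ q ∈ Q, ((fib q).card ≤ (ends q).card + (if (fib q).card = 3 then 1 else 0)) ∧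
      ((fib q).card = 3 → (S q).card = 3 ∧
        ∀ x ∈ S q, ∀ y ∈ S q, x ≠ y → s(x, y) ∈ fib q) := by
    intro q hq
    have h2 := hSQ2 q hq
    have h3 := hS3 q
    have hlb := hends_lb q
    have hcases : (S q).card = 2 ∨ (S q).card = 3 := by omega
    rcases hcases with hc | hc
    · obtain ⟨a, b, hab, hSab⟩ := Finset.card_eq_two.mp hc
      have hle : (fib q).card ≤ 1 :=
        le_trans (Finset.card_le_card (hfib_sub2 q a b hSab)) (by simp)
      constructor
      · rw [if_neg (by omega : ¬ (fib q).card = 3)]; omega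
      · intro h33; omega
    · obtain ⟨a, b, c, hab, hac, hbc, hSab⟩ := Finset.card_eq_three.mp hc
      have hsub := hfib_sub3 q a b c hSab
      have hT : ({s(a, b), s(a, c), s(b, c)} : Finset (Sym2 V)).card ≤ 3 :=
        le_trans (Finset.card_insert_le _ _) (by
          have := Finset.card_insert_le (s(a, c)) ({s(b, c)} : Finset (Sym2 V))
          simp only [Finset.card_singleton] at this ⊢
          omega)
      have hle : (fib q).card ≤ 3 := le_trans (Finset.card_le_card hsub) hT
      constructor
      · by_cases h33 : (fib q).card = 3
        · rw [if_pos h33]; omega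
        · rw [if_neg h33]; omega
      · intro h33
        refine ⟨hc, ?_⟩
        have heq : fib q = {s(a, b), s(a, c), s(b, c)} :=
          Finset.eq_of_subset_of_card_le hsub (by omega)
        intro x hx y hy hxy
        rw [hSab] at hx hy
        rw [heq]
        simp only [Finset.mem_insert, Finset.mem_singleton] at hx hy ⊢
        rcases hx with rfl | rfl | rfl <;> rcases hy with rfl | rfl | rfl <;>
          first
            | exact absurd rfl hxy
            | simp [Sym2.eq_iff]
  have hpQ : p ∉ Q := by
    intro hpQ
    rw [hQdef, Finset.mem_image] at hpQ
    obtain ⟨e, he, hWe⟩ := hpQ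
    have hef : e ∈ fib p := by simp only [hfibdef, Finset.mem_filter]; exact ⟨he, hWe⟩
    obtain ⟨a, b, hab, rfl⟩ := hfib_two p _ hef
    have ha : a ∈ S p := hSmem p _ hef a (by simp)
    have hb : b ∈ S p := hSmem p _ hef b (by simp)
    by_cases hau : a = u
    · exact hcon b (fun hbu => hab (by rw [hau, hbu])) ((hSmem' p b).mp hb)
    · exact hcon a hau ((hSmem' p a).mp ha)
  obtain ⟨b₀, hb₀⟩ := R.exists_EP hp
  have hm : G.edgeFinset.card = ∑ q ∈ Q, (fib q).card := by
    rw [hfibdef, hQdef]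
    exact Finset.card_eq_sum_card_fiberwise (fun e he => Finset.mem_image_of_mem _ he)
  set sE : Finset (V × Bool) := Finset.univ.filter (fun vb => R.EP vb ∈ Q) with hsEdef
  have hsE : sE.card = ∑ q ∈ Q, (ends q).card := by
    rw [hsEdef]
    rw [Finset.card_eq_sum_card_fiberwise
      (f := fun vb => R.EP vb) (s := Finset.univ.filter (fun vb => R.EP vb ∈ Q)) (t := Q) (fun vb hvb => (Finset.mem_filter.mp hvb).2)]
    apply Finset.sum_congr rfl
    intro q hq
    congr 1
    ext vb
    simp only [Finset.mem_filter, Finset.mem_univ, true_and, hendsdef]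
    constructor
    · rintro ⟨-, h⟩; exact h
    · intro h; exact ⟨by rw [h]; exact hq, h⟩
  have hsE_lt : sE.card < 2 * n := by
    have hnotin : (u, b₀) ∉ sE := by
      simp only [hsEdef, Finset.mem_filter, Finset.mem_univ, true_and]
      rw [hb₀]; exact hpQ
    have h1 : sE.card < Finset.univ.card := Finset.card_lt_card
      (Finset.ssubset_univ_iff.mpr
        (fun h => hnotin (by rw [h]; exact Finset.mem_univ _)))
    have h2 : (Finset.univ : Finset (V × Bool)).card = 2 * n := by
      rw [Finset.card_univ, Fintype.card_prod, Fintype.card_bool, hn, mul_comm]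
    omega
  set QT := Q.filter (fun q => (fib q).card = 3) with hQTdef
  have hsumχ : ∑ q ∈ Q, (if (fib q).card = 3 then 1 else 0) = QT.card := by
    rw [hQTdef, Finset.card_filter]
  have hmain : G.edgeFinset.card ≤ sE.card + QT.card := by
    rw [hm, hsE, ← hsumχ, ← Finset.sum_add_distrib]
    exact Finset.sum_le_sum (fun q hq => (key q hq).1)
  have hQT_tri : ∀ q ∈ QT, (S q).card = 3 ∧
      ∀ x ∈ S q, ∀ y ∈ S q, x ≠ y → s(x, y) ∈ fib q := by
    intro q hq
    rw [hQTdef, Finset.mem_filter] at hq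
    exact (key q hq.1).2 hq.2
  have hWfib : ∀ (q : ℤ × ℤ) (e : Sym2 V), e ∈ fib q → R.W e = q := by
    intro q e he; simp only [hfibdef, Finset.mem_filter] at he; exact he.2
  have hinj : Set.InjOn S ↑QT := by
    intro q hq q' hq' hSS
    obtain ⟨hc3, htr⟩ := hQT_tri q (Finset.mem_coe.mp hq)
    obtain ⟨-, htr'⟩ := hQT_tri q' (Finset.mem_coe.mp hq')
    obtain ⟨x, y, z, hxy, -, -, hSq⟩ := Finset.card_eq_three.mp hc3
    have hx : x ∈ S q := by rw [hSq]; simp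
    have hy : y ∈ S q := by rw [hSq]; simp
    have e1 := htr x hx y hy hxy
    have e2 := htr' x (hSS ▸ hx) y (hSS ▸ hy) hxy
    exact (hWfib q _ e1).symm.trans (hWfib q' _ e2)
  set F : Finset (Finset V) := QT.image S with hFdef
  have hF1 : ∀ t ∈ (↑F : Set (Finset V)), t.card = 3 ∧
      ∀ x ∈ t, ∀ y ∈ t, x ≠ y → G.Adj x y := by
    intro t ht
    rw [Finset.mem_coe, hFdef, Finset.mem_image] at ht
    obtain ⟨q, hq, rfl⟩ := ht
    exact ⟨(hQT_tri q hq).1, fun x hx y hy hxy => hclique q x hx y hy hxy⟩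
  have hF2 : ∀ t ∈ (↑F : Set (Finset V)), ∀ t' ∈ (↑F : Set (Finset V)), t ≠ t' →
      ∀ x y : V, x ≠ y → ¬(x ∈ t ∧ y ∈ t ∧ x ∈ t' ∧ y ∈ t') := by
    rintro t ht t' ht' htt x y hxy ⟨h1, h2, h3, h4⟩
    rw [Finset.mem_coe, hFdef, Finset.mem_image] at ht ht'
    obtain ⟨q, hq, rfl⟩ := ht
    obtain ⟨q', hq', rfl⟩ := ht'
    have e1 := (hQT_tri q hq).2 x h1 y h2 hxy
    have e2 := (hQT_tri q' hq').2 x h3 y h4 hxy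
    have hqq : q = q' := (hWfib q _ e1).symm.trans (hWfib q' _ e2)
    exact htt (by rw [hqq])
  have hFn := htri (↑F) hF1 hF2
  have hFcard : (↑F : Set (Finset V)).ncard = QT.card := by
    rw [Set.ncard_coe_finset, hFdef, Finset.card_image_of_injOn hinj]
  have hme : G.edgeSet.ncard = G.edgeFinset.card := by
    rw [← SimpleGraph.coe_edgeFinset, Set.ncard_coe_finset]
  rw [hFcard, hme] at hFn
  have hcast : (G.edgeFinset.card : ℤ) ≤ (sE.card : ℤ) + QT.card := by exact_mod_cast hmain
  omega
end

section
/- Let G = (V, E) be a finite simple graph and let G' be any graph obtained as follows: for each vertex u ∈ V take five new vertices forming an induced path u_1 — u^1 — u^2 — u^3 — u_2, and for each edge uv ∈ E add exactly one edge joining some vertex of {u_1, u_2} to some vertex of {v_1, v_2}; these are all the vertices and edges of G'. Then α(G') = α(G) + 2|V|, where α denotes the maximum size of an independent set. -/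
open Finset

/-- The maximum size of an independent set of `G` (the independence number `α(G)`). -/
noncomputable def maxIndep {V : Type*} (G : SimpleGraph V) : ℕ :=
  sSup {n : ℕ | ∃ S : Set V, (∀ a ∈ S, ∀ b ∈ S, ¬ G.Adj a b) ∧ S.ncard = n}

lemma indep_bddAbove {V : Type*} [Fintype V] (G : SimpleGraph V) :
    BddAbove {n : ℕ | ∃ S : Set V, (∀ a ∈ S, ∀ b ∈ S, ¬ G.Adj a b) ∧ S.ncard = n} := by
  refine ⟨Fintype.card V, fun n hn => ?_⟩
  obtain ⟨S, -, rfl⟩ := hn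
  have := Set.ncard_le_ncard (Set.subset_univ S) (Set.toFinite _)
  simpa [Set.ncard_univ, Nat.card_eq_fintype_card] using this

lemma le_maxIndep {V : Type*} [Fintype V] (G : SimpleGraph V) (S : Set V)
    (h : ∀ a ∈ S, ∀ b ∈ S, ¬ G.Adj a b) : S.ncard ≤ maxIndep G :=
  le_csSup (indep_bddAbove G) ⟨S, h, rfl⟩

lemma exists_maxIndep {V : Type*} [Fintype V] (G : SimpleGraph V) :
    ∃ S : Set V, (∀ a ∈ S, ∀ b ∈ S, ¬ G.Adj a b) ∧ S.ncard = maxIndep G := by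
  have h0 : (0 : ℕ) ∈ {n : ℕ | ∃ S : Set V, (∀ a ∈ S, ∀ b ∈ S, ¬ G.Adj a b) ∧ S.ncard = n} :=
    ⟨∅, by simp, by simp⟩
  exact Nat.sSup_mem ⟨0, h0⟩ (indep_bddAbove G)

lemma fin5_lemma : ∀ A : Finset (Fin 5),
    (∀ a ∈ A, ∀ b ∈ A, ¬((a : ℕ) + 1 = (b : ℕ) ∨ (b : ℕ) + 1 = (a : ℕ))) →
    A.card ≤ 3 ∧ (A.card = 3 → A = {0, 2, 4}) := by decide

def pathBlowup {V : Type*} (G : SimpleGraph V) (f : V → V → Fin 5) :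
    SimpleGraph (V × Fin 5) :=
  SimpleGraph.fromRel (fun p q =>
    (p.1 = q.1 ∧ ((p.2 : ℕ) + 1 = (q.2 : ℕ) ∨ (q.2 : ℕ) + 1 = (p.2 : ℕ))) ∨
    (G.Adj p.1 q.1 ∧ p.2 = f p.1 q.1 ∧ q.2 = f q.1 p.1))

/-- If `G'` is obtained from `G` by replacing every vertex by an induced path
`u_1 — u^1 — u^2 — u^3 — u_2` and replacing every edge `uv` by exactly one edge joining a
vertex of `{u_1, u_2}` to a vertex of `{v_1, v_2}`, then `α(G') = α(G) + 2|V(G)|`. -/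
theorem maxIndep_pathBlowup (V : Type) [Fintype V] (G : SimpleGraph V)
    (f : V → V → Fin 5) (hf : ∀ u v : V, G.Adj u v → f u v = 0 ∨ f u v = 4) :
    maxIndep (pathBlowup G f) = maxIndep G + 2 * Fintype.card V := by
  classical
  apply le_antisymm
  · -- upper bound
    obtain ⟨T, hTind, hTcard⟩ := exists_maxIndep (pathBlowup G f)
    rw [← hTcard]
    set A : V → Finset (Fin 5) := fun u => univ.filter (fun i => (u, i) ∈ T) with hA
    have hAprop : ∀ u, (A u).card ≤ 3 ∧ ((A u).card = 3 → A u = {0, 2, 4}) := by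
      intro u
      apply fin5_lemma
      intro a ha b hb hab
      have haT : (u, a) ∈ T := by simpa [hA] using ha
      have hbT : (u, b) ∈ T := by simpa [hA] using hb
      have hne : a ≠ b := by rcases hab with h | h <;> omega
      refine hTind _ haT _ hbT ?_
      show (SimpleGraph.fromRel _).Adj _ _
      rw [SimpleGraph.fromRel_adj]
      exact ⟨by simp [hne], Or.inl (Or.inl ⟨rfl, hab⟩)⟩
    set Sf : Finset V := univ.filter (fun u => (A u).card = 3) with hSf
    have hSind : ∀ a ∈ (↑Sf : Set V), ∀ b ∈ (↑Sf : Set V), ¬ G.Adj a b := by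
      intro u hu v hv hadj
      have hu3 : A u = {0, 2, 4} := (hAprop u).2 (by simpa [hSf] using hu)
      have hv3 : A v = {0, 2, 4} := (hAprop v).2 (by simpa [hSf] using hv)
      have hfu : f u v ∈ A u := by
        rw [hu3]; rcases hf u v hadj with h | h <;> simp [h]
      have hfv : f v u ∈ A v := by
        rw [hv3]; rcases hf v u hadj.symm with h | h <;> simp [h]
      have h1 : (u, f u v) ∈ T := by simpa [hA] using hfu
      have h2 : (v, f v u) ∈ T := by simpa [hA] using hfv
      refine hTind _ h1 _ h2 ?_
      show (SimpleGraph.fromRel _).Adj _ _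
      rw [SimpleGraph.fromRel_adj]
      exact ⟨by simp [hadj.ne], Or.inl (Or.inr ⟨hadj, rfl, rfl⟩)⟩
    have hSle : Sf.card ≤ maxIndep G := by
      have := le_maxIndep G (↑Sf) hSind
      simpa [Set.ncard_coe_finset] using this
    -- T.ncard = ∑ (A u).card
    have hTfin : T.Finite := Set.toFinite T
    have hcard : T.ncard = ∑ u : V, (A u).card := by
      rw [Set.ncard_eq_toFinset_card' T]
      rw [Finset.card_eq_sum_card_fiberwise (f := fun p => p.1)
        (t := (univ : Finset V)) (fun p _ => mem_univ _)]
      refine Finset.sum_congr rfl (fun u _ => ?_)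
      rw [show T.toFinset.filter (fun p => p.1 = u)
          = (A u).map ⟨fun i => (u, i), fun a b h => by simpa using h⟩ by
        ext ⟨v, i⟩
        simp only [mem_filter, Set.mem_toFinset, mem_map, Function.Embedding.coeFn_mk, hA]
        constructor
        · rintro ⟨h1, rfl⟩; exact ⟨i, by simpa using h1, rfl⟩
        · rintro ⟨j, hj, h⟩
          obtain ⟨rfl, rfl⟩ := Prod.mk.injEq .. ▸ h
          exact ⟨by simpa using hj, rfl⟩]
      rw [Finset.card_map]
    rw [hcard]
    have hbound : ∑ u : V, (A u).card ≤ ∑ u : V, (if u ∈ Sf then 3 else 2) := by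
      refine Finset.sum_le_sum (fun u _ => ?_)
      by_cases h : u ∈ Sf
      · simp [h, (hAprop u).1]
      · simp only [h, if_false]
        have : (A u).card ≠ 3 := by simpa [hSf] using h
        have := (hAprop u).1
        omega
    have hsum : ∑ u : V, (if u ∈ Sf then 3 else 2) = Sf.card + 2 * Fintype.card V := by
      have : ∀ u, (if u ∈ Sf then 3 else 2) = (if u ∈ Sf then 1 else 0) + 2 := by
        intro u; by_cases h : u ∈ Sf <;> simp [h]
      rw [Finset.sum_congr rfl (fun u _ => this u), Finset.sum_add_distrib]
      simp [Finset.sum_ite_mem, Finset.card_univ, mul_comm]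
    calc ∑ u : V, (A u).card ≤ Sf.card + 2 * Fintype.card V := by rw [← hsum]; exact hbound
      _ ≤ maxIndep G + 2 * Fintype.card V := by omega
  · -- lower bound
    obtain ⟨S, hSind, hScard⟩ := exists_maxIndep G
    set Tf : Finset (V × Fin 5) := univ.filter (fun p =>
      if p.1 ∈ S then p.2 ∈ ({0, 2, 4} : Finset (Fin 5)) else p.2 ∈ ({1, 3} : Finset (Fin 5)))
      with hTf
    have hTind : ∀ a ∈ (↑Tf : Set (V × Fin 5)), ∀ b ∈ (↑Tf : Set (V × Fin 5)),
        ¬ (pathBlowup G f).Adj a b := by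
      intro p hp q hq hadj
      simp only [hTf, coe_filter, Set.mem_setOf_eq, mem_univ, true_and] at hp hq
      rw [pathBlowup, SimpleGraph.fromRel_adj] at hadj
      obtain ⟨hne, hr⟩ := hadj
      -- symmetric case split
      have key : ∀ p q : V × Fin 5,
          (if p.1 ∈ S then p.2 ∈ ({0, 2, 4} : Finset (Fin 5)) else p.2 ∈ ({1, 3} : Finset (Fin 5))) →
          (if q.1 ∈ S then q.2 ∈ ({0, 2, 4} : Finset (Fin 5)) else q.2 ∈ ({1, 3} : Finset (Fin 5))) →
          ((p.1 = q.1 ∧ ((p.2 : ℕ) + 1 = (q.2 : ℕ) ∨ (q.2 : ℕ) + 1 = (p.2 : ℕ))) ∨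
            (G.Adj p.1 q.1 ∧ p.2 = f p.1 q.1 ∧ q.2 = f q.1 p.1)) → False := by
        rintro ⟨u, i⟩ ⟨v, j⟩ hp hq (⟨heq, hcons⟩ | ⟨hadj, hpi, hqj⟩)
        · simp only at heq hcons hp hq
          subst heq
          by_cases h : u ∈ S <;> simp [h] at hp hq <;>
            rcases hp with rfl | rfl | rfl <;> rcases hq with rfl | rfl | rfl <;>
            simp_all <;> omega
        · simp only at hadj hpi hqj hp hq
          by_cases hu : u ∈ S
          · by_cases hv : v ∈ S
            · exact hSind u hu v hv hadj
            · simp only [hv, if_false] at hq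
              rcases hf v u hadj.symm with h | h <;> rw [hqj, h] at hq <;> simp at hq
          · simp only [hu, if_false] at hp
            rcases hf u v hadj with h | h <;> rw [hpi, h] at hp <;> simp at hp
      rcases hr with h | h
      · exact key p q hp hq h
      · exact key q p hq hp h
    have hle := le_maxIndep (pathBlowup G f) (↑Tf) hTind
    rw [Set.ncard_coe_finset] at hle
    have hTfcard : Tf.card = maxIndep G + 2 * Fintype.card V := by
      have heq : Tf = S.toFinset ×ˢ ({0, 2, 4} : Finset (Fin 5)) ∪
          S.toFinsetᶜ ×ˢ ({1, 3} : Finset (Fin 5)) := by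
        ext ⟨u, i⟩
        by_cases h : u ∈ S <;>
          simp [hTf, h, Finset.mem_product]
      have hdisj : Disjoint (S.toFinset ×ˢ ({0, 2, 4} : Finset (Fin 5)))
          (S.toFinsetᶜ ×ˢ ({1, 3} : Finset (Fin 5))) := by
        rw [Finset.disjoint_left]
        rintro ⟨u, i⟩ h1 h2
        simp only [Finset.mem_product, Finset.mem_compl] at h1 h2
        exact h2.1 h1.1
      rw [heq, Finset.card_union_of_disjoint hdisj, Finset.card_product, Finset.card_product,
        Finset.card_compl]
      have hc024 : ({0, 2, 4} : Finset (Fin 5)).card = 3 := by decide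
      have hc13 : ({1, 3} : Finset (Fin 5)).card = 2 := by decide
      have hsle : S.toFinset.card ≤ Fintype.card V := Finset.card_le_univ _
      have hs : S.toFinset.card = maxIndep G := by
        rw [← hScard, Set.ncard_eq_toFinset_card']
      rw [hc024, hc13, hs]
      have := hsle
      rw [hs] at this
      omega
    omega
end

section
/- If G is a triangle-free finite simple graph of maximum degree at most 3 that admits a 0-bend CPG representation, then the 2-subdivision of G also admits a 0-bend CPG representation. -/
/-! ## The 2-subdivision -/

/-- The vertex type of the 2-subdivision of `G`: the original vertices, together with, for
every edge `uv` of `G`, the two new vertices `(u, v)` (the subdivision vertex adjacent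
to `u`) and `(v, u)` (the one adjacent to `v`). -/
def SubdivV {V : Type*} (G : SimpleGraph V) : Type _ :=
  V ⊕ {p : V × V // G.Adj p.1 p.2}

/-- The defining relation of the 2-subdivision: every edge `uv` of `G` is replaced by the
path `u — (u,v) — (v,u) — v`. -/
def twoSubRel {V : Type*} (G : SimpleGraph V) : SubdivV G → SubdivV G → Prop
  | Sum.inl u, Sum.inr e => e.1.1 = u
  | Sum.inr e, Sum.inr g => e.1.1 = g.1.2 ∧ e.1.2 = g.1.1
  | _, _ => False

/-- The 2-subdivision of `G`: every edge `uv` is replaced by a path `u — x_{uv} — y_{uv} — v`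
with two new vertices. -/
def twoSubdivision {V : Type*} (G : SimpleGraph V) : SimpleGraph (SubdivV G) :=
  SimpleGraph.fromRel (twoSubRel G)

/-!
In a 0-bend representation two segments share at most one point (two common points would give
a shared unit segment), and at such a contact at least one of them ends. Scale the plane by 5.
For every edge `uv` pick a segment ending at the contact `c`, say that of `u` (if both end
there, that of the smaller vertex), and let `d` be the unit vector pointing into it. Shorten
the scaled segment of `u` by 2 at `5c` and represent the subdivision vertices next to `v` and
to `u` by the unit segments `[5c, 5c + d]` and `[5c + d, 5c + 2d]`. The factor 5 leaves room to
shorten a segment at both ends. Since `G` is triangle-free, no point lies on three segments;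
hence distinct neighbours of `u` touch it at distinct points, and each new unit segment meets
exactly the two segments it should.
-/

theorem List.infix_getElem_pair {α : Type*} (l : List α) (i : ℕ) (h : i + 1 < l.length) :
    [l[i], l[i + 1]] <:+: l := by
  have : (l.drop i).take 2 = [l[i], l[i + 1]] := by
    rw [List.drop_eq_getElem_cons (by omega), List.drop_eq_getElem_cons h]; rfl
  exact this ▸ (List.take_prefix _ _).isInfix.trans (List.drop_suffix _ _).isInfix

theorem List.infix_getElem_triple {α : Type*} (l : List α) (i : ℕ) (h : i + 2 < l.length) :
    [l[i], l[i + 1], l[i + 2]] <:+: l := by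
  have : (l.drop i).take 3 = [l[i], l[i + 1], l[i + 2]] := by
    rw [List.drop_eq_getElem_cons (by omega), List.drop_eq_getElem_cons (by omega),
      List.drop_eq_getElem_cons h]; rfl
  exact this ▸ (List.take_prefix _ _).isInfix.trans (List.drop_suffix _ _).isInfix

theorem GridStep.symm {p q : ℤ × ℤ} (h : GridStep p q) : GridStep q p := by
  unfold GridStep at *; omega

theorem GridStep.ne {p q : ℤ × ℤ} (h : GridStep p q) : p ≠ q := by
  rintro rfl; simp [GridStep] at h

theorem gridStep_zero_iff {d : ℤ × ℤ} :
    GridStep 0 d ↔ d = (1, 0) ∨ d = (-1, 0) ∨ d = (0, 1) ∨ d = (0, -1) := by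
  obtain ⟨a, b⟩ := d
  simp only [GridStep, Prod.fst_zero, Prod.snd_zero, zero_sub, Int.natAbs_neg, Prod.mk.injEq]
  omega

theorem gridStep_add_iff {p d : ℤ × ℤ} : GridStep p (p + d) ↔ GridStep 0 d := by
  simp [GridStep]

theorem GridStep.sub_eq_sub_of_aligned {a p c : ℤ × ℤ} (hap : GridStep a p) (hpc : GridStep p c)
    (hac : a ≠ c) (haligned : a.1 = c.1 ∨ a.2 = c.2) : c - p = p - a := by
  rw [Ne, Prod.ext_iff] at hac
  unfold GridStep at hap hpc
  ext <;> simp only [Prod.fst_sub, Prod.snd_sub] <;> omega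

theorem ConsecIn.mem_and_gridStep {l : List (ℤ × ℤ)} (hl : l.IsChain GridStep) {p q : ℤ × ℤ}
    (h : ConsecIn l p q) : p ∈ l ∧ q ∈ l ∧ GridStep p q := by
  have key : ∀ a b, [a, b] <:+: l → a ∈ l ∧ b ∈ l ∧ GridStep a b := fun a b hab =>
    ⟨hab.subset (by simp), hab.subset (by simp), List.isChain_pair.1 (hl.infix hab)⟩
  rcases h with h | h
  · exact key p q h
  · obtain ⟨hq, hp, hqp⟩ := key q p h
    exact ⟨hp, hq, hqp.symm⟩

theorem consecIn_reverse_iff {l : List (ℤ × ℤ)} {p q : ℤ × ℤ} :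
    ConsecIn l.reverse p q ↔ ConsecIn l p q := by
  have key : ∀ a b : ℤ × ℤ, [a, b] <:+: l.reverse ↔ [b, a] <:+: l := fun a b => by
    rw [← List.reverse_infix]; simp
  rw [ConsecIn, ConsecIn, key, key, Or.comm]

def gridLine (o d : ℤ × ℤ) (n : ℕ) : List (ℤ × ℤ) :=
  (List.range (n + 1)).map fun i : ℕ => o + (i : ℤ) • d

section gridLine

variable {o d : ℤ × ℤ} {n : ℕ}

@[simp] theorem length_gridLine : (gridLine o d n).length = n + 1 := by
  simp [gridLine]

@[simp] theorem getElem_gridLine {i : ℕ} (h : i < (gridLine o d n).length) :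
    (gridLine o d n)[i] = o + (i : ℤ) • d := by
  simp only [gridLine, List.getElem_map, List.getElem_range]

theorem mem_gridLine {z : ℤ × ℤ} : z ∈ gridLine o d n ↔ ∃ i ≤ n, z = o + (i : ℤ) • d := by
  simp only [gridLine, List.mem_map, List.mem_range, Nat.lt_succ_iff, eq_comm]

theorem gridLine_reverse : (gridLine o d n).reverse = gridLine (o + (n : ℤ) • d) (-d) n := by
  refine List.ext_getElem (by simp) fun i h _ => ?_
  simp only [List.length_reverse, length_gridLine] at h
  simp only [List.getElem_reverse, getElem_gridLine, length_gridLine]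
  rw [Nat.cast_sub (by omega)]
  ext <;> simp <;> ring

theorem isChain_gridLine (hd : GridStep 0 d) : (gridLine o d n).IsChain GridStep := by
  refine List.isChain_iff_getElem.2 fun i h => ?_
  simp only [getElem_gridLine, Nat.cast_add, Nat.cast_one, add_smul, one_smul, ← add_assoc]
  exact gridStep_add_iff.2 hd

theorem nodup_gridLine (hd : d ≠ 0) : (gridLine o d n).Nodup := by
  refine List.nodup_range.map fun i j hij => ?_
  exact_mod_cast smul_left_injective ℤ hd (add_left_cancel hij)

theorem consecIn_gridLine {i : ℕ} (hi : i < n) :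
    ConsecIn (gridLine o d n) (o + (i : ℤ) • d) (o + ((i + 1 : ℕ) : ℤ) • d) := by
  have := List.infix_getElem_pair (gridLine o d n) i (by rw [length_gridLine]; omega)
  simp only [getElem_gridLine] at this
  exact Or.inl this

end gridLine

namespace GridPath

theorem bendSet_eq_empty {P : GridPath} (hP : P.BendsAtMost 0) : P.bendSet = ∅ := by
  have hfin : P.bendSet.Finite := P.pts.finite_toSet.subset fun p ⟨_, _, hp, _⟩ =>
    hp.subset (by simp)
  exact (Set.ncard_eq_zero hfin).1 (Nat.le_zero.1 hP)

theorem isEndpoint_iff {P : GridPath} {z : ℤ × ℤ} :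
    P.IsEndpoint z ↔ P.pts.head? = some z ∨ P.pts.getLast? = some z := by
  rw [List.head?_eq_some_head P.ne_nil, List.getLast?_eq_some_getLast P.ne_nil]
  simp [IsEndpoint, first, last, eq_comm]

theorem gridStep_getElem {P : GridPath} {i : ℕ} (h : i + 1 < P.pts.length) :
    GridStep P.pts[i] P.pts[i + 1] :=
  List.isChain_iff_getElem.1 P.step i h

theorem getElem_sub_getElem_of_bendsAtMost_zero {P : GridPath} (hP : P.BendsAtMost 0) {i : ℕ}
    (h : i + 2 < P.pts.length) : P.pts[i + 2] - P.pts[i + 1] = P.pts[i + 1] - P.pts[i] := by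
  refine (gridStep_getElem (by omega)).sub_eq_sub_of_aligned (gridStep_getElem h) ?_ ?_
  · intro heq
    have := (List.Nodup.getElem_inj_iff P.nodup).1 heq
    omega
  · by_contra hbend
    rw [not_or] at hbend
    have hp : P.pts[i + 1] ∈ P.bendSet := ⟨_, _, P.pts.infix_getElem_triple i h, hbend⟩
    rw [bendSet_eq_empty hP] at hp
    exact hp

theorem exists_pts_eq_gridLine {P : GridPath} (hP : P.BendsAtMost 0) :
    ∃ d, GridStep 0 d ∧ P.pts = gridLine P.first d (P.pts.length - 1) := by
  have h2 := P.two_le_length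
  refine ⟨P.pts[1] - P.pts[0], (gridStep_add_iff (p := P.pts[0])).1 ?_, ?_⟩
  · rw [add_sub_cancel]; exact gridStep_getElem (by omega)
  refine List.ext_getElem (by rw [length_gridLine]; omega) fun i hi _ => ?_
  rw [getElem_gridLine, first, List.head_eq_getElem]
  induction i using Nat.twoStepInduction with
  | zero => simp
  | one => simp
  | more i ih₀ ih₁ =>
    rw [← sub_add_cancel P.pts[i + 2] P.pts[i + 1],
      getElem_sub_getElem_of_bendsAtMost_zero hP hi,
      ih₁ (by omega) (by rw [length_gridLine]; omega), ih₀ (by omega) (by rw [length_gridLine]; omega)]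
    push_cast
    ext <;> simp <;> ring

end GridPath

structure GridSegment where
  lo : ℤ × ℤ
  hi : ℤ × ℤ
  vertical_or_horizontal : lo.1 = hi.1 ∧ lo.2 < hi.2 ∨ lo.2 = hi.2 ∧ lo.1 < hi.1

namespace GridSegment

variable (s : GridSegment)

theorem lo_le_hi : s.lo ≤ s.hi := by
  rw [Prod.le_def]; rcases s.vertical_or_horizontal with h | h <;> omega

/-- In the product order on `ℤ × ℤ`, the grid points of a segment form the box `Icc lo hi`. -/
instance : SetLike GridSegment (ℤ × ℤ) where
  coe s := Set.Icc s.lo s.hi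
  coe_injective s t h := by
    obtain ⟨hlo, hhi⟩ := (Set.Icc_eq_Icc_iff s.lo_le_hi).1 h
    cases s; cases t; congr

variable {s}

theorem mem_iff {z : ℤ × ℤ} :
    z ∈ s ↔ s.lo.1 ≤ z.1 ∧ z.1 ≤ s.hi.1 ∧ s.lo.2 ≤ z.2 ∧ z.2 ≤ s.hi.2 := by
  change s.lo ≤ z ∧ z ≤ s.hi ↔ _
  simp only [Prod.le_def, and_assoc]
  tauto

variable (s)

def IsEnd (z : ℤ × ℤ) : Prop := z = s.lo ∨ z = s.hi

def dir : ℤ × ℤ := if s.lo.2 = s.hi.2 then (1, 0) else (0, 1)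

def length : ℕ := (s.hi.1 - s.lo.1 + (s.hi.2 - s.lo.2)).toNat

def pts : List (ℤ × ℤ) := gridLine s.lo s.dir s.length

theorem gridStep_zero_dir : GridStep 0 s.dir := by
  unfold dir; split <;> simp [GridStep]

theorem dir_ne_zero : s.dir ≠ 0 := s.gridStep_zero_dir.ne.symm

theorem hi_eq : s.hi = s.lo + (s.length : ℤ) • s.dir := by
  unfold length dir
  rcases s.vertical_or_horizontal with ⟨h₁, h₂⟩ | ⟨h₁, h₂⟩
  · ext <;> simp [h₁, h₂.ne]; omega
  · ext <;> simp [h₁]; omega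

theorem one_le_length : 1 ≤ s.length := by
  unfold length; rcases s.vertical_or_horizontal with h | h <;> omega

def toPath : GridPath where
  pts := s.pts
  two_le_length := by simp [pts, s.one_le_length]
  step := isChain_gridLine s.gridStep_zero_dir
  nodup := nodup_gridLine s.dir_ne_zero

variable {s}

theorem mem_pts {z : ℤ × ℤ} : z ∈ s.pts ↔ z ∈ s := by
  rw [pts, mem_gridLine, mem_iff]
  unfold length dir
  rcases s.vertical_or_horizontal with ⟨h₁, h₂⟩ | ⟨h₁, h₂⟩
  · simp only [h₂.ne, if_false]
    constructor
    · rintro ⟨i, hi, rfl⟩; simp; omega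
    · rintro ⟨_, _, _, _⟩
      exact ⟨(z.2 - s.lo.2).toNat, by omega, by ext <;> simp <;> omega⟩
  · simp only [h₁, if_true]
    constructor
    · rintro ⟨i, hi, rfl⟩; simp; omega
    · rintro ⟨_, _, _, _⟩
      exact ⟨(z.1 - s.lo.1).toNat, by omega, by ext <;> simp <;> omega⟩

theorem head?_pts : s.pts.head? = some s.lo := by
  rw [List.head?_eq_getElem?]; simp [pts]

theorem getLast?_pts : s.pts.getLast? = some s.hi := by
  rw [List.getLast?_eq_getElem?, s.hi_eq]
  simp [pts]

theorem eq_add_dir_or_eq_add_dir {p q : ℤ × ℤ} (hp : p ∈ s) (hq : q ∈ s) (hpq : GridStep p q) :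
    q = p + s.dir ∨ p = q + s.dir := by
  rw [mem_iff] at hp hq
  unfold GridStep at hpq
  unfold dir
  rcases s.vertical_or_horizontal with ⟨h₁, h₂⟩ | ⟨h₁, h₂⟩
  · simp only [h₂.ne, if_false, Prod.ext_iff, Prod.fst_add, Prod.snd_add]; omega
  · simp only [h₁, if_true, Prod.ext_iff, Prod.fst_add, Prod.snd_add]; omega

theorem consecIn_pts_iff {p q : ℤ × ℤ} :
    ConsecIn s.pts p q ↔ p ∈ s ∧ q ∈ s ∧ GridStep p q := by
  refine ⟨fun h => ?_, fun ⟨hp, hq, hpq⟩ => ?_⟩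
  · obtain ⟨hp, hq, hpq⟩ := h.mem_and_gridStep s.toPath.step
    exact ⟨mem_pts.1 hp, mem_pts.1 hq, hpq⟩
  have key : ∀ p, p + s.dir ∈ s → p ∈ s → ConsecIn s.pts p (p + s.dir) := by
    intro p hp' hp
    obtain ⟨i, hi, rfl⟩ := mem_gridLine.1 (mem_pts.2 hp)
    obtain ⟨j, hj, hji⟩ := mem_gridLine.1 (mem_pts.2 hp')
    have hji : j = i + 1 := by
      rw [add_assoc, ← add_one_zsmul] at hji
      exact_mod_cast smul_left_injective ℤ s.dir_ne_zero
        (add_left_cancel hji).symm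
    have := consecIn_gridLine (o := s.lo) (d := s.dir) (show i < s.length by omega)
    rwa [Nat.cast_succ, add_one_zsmul, ← add_assoc] at this
  rcases eq_add_dir_or_eq_add_dir hp hq hpq with rfl | rfl
  · exact key p hq hp
  · exact Or.comm.1 (key q hp hq)

theorem exists_gridLine_eq (o : ℤ × ℤ) {d : ℤ × ℤ} (hd : GridStep 0 d) {n : ℕ} (hn : 0 < n) :
    ∃ s : GridSegment, gridLine o d n = s.pts ∨ gridLine o d n = s.pts.reverse := by
  rcases gridStep_zero_iff.1 hd with rfl | rfl | rfl | rfl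
  · refine ⟨⟨o, (o.1 + n, o.2), Or.inr ⟨rfl, by simpa⟩⟩, Or.inl ?_⟩
    simp [pts, dir, length]
  · refine ⟨⟨(o.1 - n, o.2), o, Or.inr ⟨rfl, by simpa⟩⟩, Or.inr ?_⟩
    simp only [pts, dir, length, gridLine_reverse, if_true]
    congr 1 <;> simp
  · refine ⟨⟨o, (o.1, o.2 + n), Or.inl ⟨rfl, by simpa⟩⟩, Or.inl ?_⟩
    simp [pts, dir, length, hn.ne']
  · refine ⟨⟨(o.1, o.2 - n), o, Or.inl ⟨rfl, by simpa⟩⟩, Or.inr ?_⟩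
    simp only [pts, dir, length, gridLine_reverse]
    congr 1 <;> simp [hn.ne']

theorem exists_gridStep_of_mem {s t : GridSegment} {z z' : ℤ × ℤ} (hzz' : z ≠ z')
    (hzs : z ∈ s) (hzt : z ∈ t) (hzs' : z' ∈ s) (hzt' : z' ∈ t) :
    ∃ p q, GridStep p q ∧ p ∈ s ∧ q ∈ s ∧ p ∈ t ∧ q ∈ t := by
  rw [mem_iff] at hzs hzt hzs' hzt'
  rw [Ne, Prod.ext_iff] at hzz'
  have hs := s.vertical_or_horizontal
  have ht := t.vertical_or_horizontal
  by_cases hy : z.2 = z'.2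
  · refine ⟨(min z.1 z'.1, z.2), (min z.1 z'.1 + 1, z.2), ?_⟩
    simp only [GridStep, mem_iff]; omega
  · refine ⟨(z.1, min z.2 z'.2), (z.1, min z.2 z'.2 + 1), ?_⟩
    simp only [GridStep, mem_iff]; omega

end GridSegment

def GridPath.Traces (P : GridPath) (s : GridSegment) : Prop :=
  P.pts = s.pts ∨ P.pts = s.pts.reverse

namespace GridPath

variable {P : GridPath} {s : GridSegment}

theorem traces_toPath (s : GridSegment) : s.toPath.Traces s := Or.inl rfl

theorem exists_traces (hP : P.BendsAtMost 0) : ∃ s, P.Traces s := by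
  obtain ⟨d, hd, hPd⟩ := exists_pts_eq_gridLine hP
  unfold Traces
  rw [hPd]
  exact GridSegment.exists_gridLine_eq _ hd (by have := P.two_le_length; omega)

theorem Traces.mem_toSet (h : P.Traces s) {z : ℤ × ℤ} : z ∈ P.toSet ↔ z ∈ s := by
  change z ∈ P.pts ↔ _
  rcases h with h | h <;> simp [h, ← GridSegment.mem_pts]

theorem Traces.isEndpoint_iff (h : P.Traces s) {z : ℤ × ℤ} : P.IsEndpoint z ↔ s.IsEnd z := by
  rw [GridPath.isEndpoint_iff, GridSegment.IsEnd]
  rcases h with h | h <;>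
    simp [h, GridSegment.head?_pts, GridSegment.getLast?_pts, eq_comm, or_comm]

theorem Traces.consecIn_iff (h : P.Traces s) {p q : ℤ × ℤ} :
    ConsecIn P.pts p q ↔ p ∈ s ∧ q ∈ s ∧ GridStep p q := by
  rw [← GridSegment.consecIn_pts_iff]
  rcases h with h | h <;> rw [h]
  exact consecIn_reverse_iff

theorem Traces.bendsAtMost_zero (h : P.Traces s) : P.BendsAtMost 0 := by
  suffices P.bendSet = ∅ by simp [BendsAtMost, this]
  refine Set.eq_empty_of_forall_notMem fun p ⟨a, c, habc, hac⟩ => ?_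
  have ha := h.mem_toSet.1 (habc.subset (by simp) : a ∈ P.pts)
  have hc := h.mem_toSet.1 (habc.subset (by simp) : c ∈ P.pts)
  rw [GridSegment.mem_iff] at ha hc
  rcases s.vertical_or_horizontal with hs | hs <;> omega

end GridPath

structure SegmentRep {V : Type*} (G : SimpleGraph V) where
  seg : V → GridSegment
  inter_subsingleton : ∀ u v, u ≠ v → ((seg u : Set (ℤ × ℤ)) ∩ seg v).Subsingleton
  isEnd_of_mem : ∀ u v, u ≠ v → ∀ z ∈ seg u, z ∈ seg v → (seg u).IsEnd z ∨ (seg v).IsEnd z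
  adj_iff : ∀ u v, u ≠ v → (G.Adj u v ↔ ((seg u : Set (ℤ × ℤ)) ∩ seg v).Nonempty)

open GridPath

namespace SegmentRep

variable {V : Type*} {G : SimpleGraph V}

def toCPGRep (R : SegmentRep G) : CPGRep G where
  path u := (R.seg u).toPath
  interiorly_disjoint u v huv p hu hv := by
    simp only [(traces_toPath _).mem_toSet, (traces_toPath _).isEndpoint_iff] at hu hv ⊢
    exact R.isEnd_of_mem u v huv p hu hv
  no_shared_segment u v huv p q hu hv := by
    rw [(traces_toPath _).consecIn_iff] at hu hv
    exact hu.2.2.ne (R.inter_subsingleton u v huv ⟨hu.1, hv.1⟩ ⟨hu.2.1, hv.2.1⟩)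
  adj_iff u v huv := by
    simp [R.adj_iff u v huv, (traces_toPath _).mem_toSet, Set.Nonempty]

theorem toCPGRep_bendsAtMost_zero (R : SegmentRep G) : R.toCPGRep.BendsAtMost 0 :=
  fun u => (traces_toPath (R.seg u)).bendsAtMost_zero

def ofInter (seg : V → GridSegment)
    (hadj : ∀ u v, G.Adj u v → ∃ z, (seg u : Set (ℤ × ℤ)) ∩ seg v = {z})
    (hnadj : ∀ u v, u ≠ v → ¬G.Adj u v → (seg u : Set (ℤ × ℤ)) ∩ seg v = ∅)
    (hend : ∀ u v, u ≠ v → ∀ z ∈ seg u, z ∈ seg v → (seg u).IsEnd z ∨ (seg v).IsEnd z) :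
    SegmentRep G where
  seg := seg
  inter_subsingleton u v huv := by
    by_cases h : G.Adj u v
    · obtain ⟨z, hz⟩ := hadj u v h
      exact hz ▸ Set.subsingleton_singleton
    · exact hnadj u v huv h ▸ Set.subsingleton_empty
  isEnd_of_mem := hend
  adj_iff u v huv := by
    refine ⟨fun h => ?_, fun h => by_contra fun h' => ?_⟩
    · obtain ⟨z, hz⟩ := hadj u v h
      exact hz ▸ Set.singleton_nonempty z
    · exact h.ne_empty (hnadj u v huv h')

end SegmentRep

theorem CPGRep.nonempty_segmentRep {V : Type*} {G : SimpleGraph V} (R : CPGRep G)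
    (hR : R.BendsAtMost 0) : Nonempty (SegmentRep G) := by
  choose s hs using fun u => exists_traces (hR u)
  refine ⟨⟨s, fun u v huv z hz z' hz' => ?_, fun u v huv z hu hv => ?_, fun u v huv => ?_⟩⟩
  · by_contra hne
    obtain ⟨p, q, hpq, hpu, hqu, hpv, hqv⟩ :=
      GridSegment.exists_gridStep_of_mem hne hz.1 hz.2 hz'.1 hz'.2
    exact R.no_shared_segment u v huv p q ((hs u).consecIn_iff.2 ⟨hpu, hqu, hpq⟩)
      ((hs v).consecIn_iff.2 ⟨hpv, hqv, hpq⟩)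
  · simpa only [(hs u).isEndpoint_iff, (hs v).isEndpoint_iff] using
      R.interiorly_disjoint u v huv z ((hs u).mem_toSet.2 hu) ((hs v).mem_toSet.2 hv)
  · simp [R.adj_iff u v huv, (hs u).mem_toSet, (hs v).mem_toSet, Set.Nonempty]

theorem isBkCPG_zero_iff {V : Type*} {G : SimpleGraph V} :
    IsBkCPG G 0 ↔ Nonempty (SegmentRep G) :=
  ⟨fun ⟨R, hR⟩ => R.nonempty_segmentRep hR,
    fun ⟨R⟩ => ⟨R.toCPGRep, R.toCPGRep_bendsAtMost_zero⟩⟩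

namespace GridSegment

variable (s : GridSegment)

def scaled : Set (ℤ × ℤ) := Set.Icc (5 • s.lo) (5 • s.hi)

def inward (c : ℤ × ℤ) : ℤ × ℤ := if c = s.lo then s.dir else -s.dir

def scaleTrim (T : ℤ × ℤ → Prop) [DecidablePred T] : GridSegment where
  lo := 5 • s.lo + (if T s.lo then 2 else 0 : ℤ) • s.dir
  hi := 5 • s.hi - (if T s.hi then 2 else 0 : ℤ) • s.dir
  vertical_or_horizontal := by
    unfold dir
    rcases s.vertical_or_horizontal with ⟨h₁, h₂⟩ | ⟨h₁, h₂⟩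
    · left; simp only [h₂.ne, if_false]; split_ifs <;> simp <;> omega
    · right; simp only [h₁, if_true]; split_ifs <;> simp <;> omega

def ofGridStep (p q : ℤ × ℤ) (h : GridStep p q) : GridSegment where
  lo := p ⊓ q
  hi := p ⊔ q
  vertical_or_horizontal := by
    unfold GridStep at h
    simp only [Prod.fst_inf, Prod.snd_inf, Prod.fst_sup, Prod.snd_sup]
    omega

variable {s}

theorem mem_scaled_iff {z : ℤ × ℤ} : z ∈ s.scaled ↔
    5 * s.lo.1 ≤ z.1 ∧ z.1 ≤ 5 * s.hi.1 ∧ 5 * s.lo.2 ≤ z.2 ∧ z.2 ≤ 5 * s.hi.2 := by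
  simp only [scaled, Set.mem_Icc, Prod.le_def, Prod.smul_fst, Prod.smul_snd, Int.nsmul_eq_mul,
    Nat.cast_ofNat]
  tauto

theorem smul_mem_scaled {c : ℤ × ℤ} (hc : c ∈ s) : 5 • c ∈ s.scaled := by
  rw [mem_iff] at hc
  simp only [mem_scaled_iff, Prod.smul_fst, Prod.smul_snd, Int.nsmul_eq_mul, Nat.cast_ofNat]
  omega

theorem exists_smul_eq_of_mem_scaled {t : GridSegment}
    (hst : ((s : Set (ℤ × ℤ)) ∩ t).Subsingleton) {z : ℤ × ℤ} (hs : z ∈ s.scaled)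
    (ht : z ∈ t.scaled) : ∃ c ∈ s, c ∈ t ∧ z = 5 • c := by
  rw [mem_scaled_iff] at hs ht
  -- the corners of the box `s ∩ t` are common points, hence equal
  set m : ℤ × ℤ := (max s.lo.1 t.lo.1, max s.lo.2 t.lo.2)
  set M : ℤ × ℤ := (min s.hi.1 t.hi.1, min s.hi.2 t.hi.2)
  have hm : m ∈ (s : Set (ℤ × ℤ)) ∩ t := by
    simp only [Set.mem_inter_iff, SetLike.mem_coe, mem_iff, m]; omega
  have hM : M ∈ (s : Set (ℤ × ℤ)) ∩ t := by
    simp only [Set.mem_inter_iff, SetLike.mem_coe, mem_iff, M]; omega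
  have hmM := hst hm hM
  simp only [m, M, Prod.ext_iff] at hmM
  refine ⟨m, hm.1, hm.2, ?_⟩
  ext <;> simp only [Prod.smul_mk, Int.nsmul_eq_mul, Nat.cast_ofNat, m] <;> omega

theorem gridStep_zero_inward (c : ℤ × ℤ) : GridStep 0 (s.inward c) := by
  unfold inward dir; split_ifs <;> simp [GridStep]

theorem inward_ne_zero (c : ℤ × ℤ) : s.inward c ≠ 0 := (s.gridStep_zero_inward c).ne.symm

theorem inward_lo : s.inward s.lo = s.dir := if_pos rfl

theorem inward_hi : s.inward s.hi = -s.dir := by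
  refine if_neg fun h => ?_
  rcases s.vertical_or_horizontal with h' | h' <;> rw [h] at h' <;> omega

theorem add_smul_inward_ne_smul (c q : ℤ × ℤ) {k : ℤ} (hk₁ : 1 ≤ k) (hk₄ : k ≤ 4) :
    5 • c + k • s.inward c ≠ 5 • q := by
  rcases gridStep_zero_iff.1 (s.gridStep_zero_inward c) with h | h | h | h <;> rw [h] <;>
    simp [Prod.ext_iff] <;> omega

theorem add_smul_inward_mem_scaled {c : ℤ × ℤ} (hc : s.IsEnd c) {k : ℤ} (hk₀ : 0 ≤ k)
    (hk₅ : k ≤ 5) : 5 • c + k • s.inward c ∈ s.scaled := by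
  rw [mem_scaled_iff]
  have := s.vertical_or_horizontal
  rcases hc with rfl | rfl <;> simp only [inward_lo, inward_hi] <;> unfold dir <;>
    split_ifs <;> simp <;> omega

theorem eq_of_add_smul_inward_eq {c c' : ℤ × ℤ} (hc : s.IsEnd c) (hc' : s.IsEnd c')
    {k k' : ℤ} (hk₀ : 0 ≤ k) (hk₂ : k ≤ 2) (hk₀' : 0 ≤ k') (hk₂' : k' ≤ 2)
    (h : 5 • c + k • s.inward c = 5 • c' + k' • s.inward c') : c = c' ∧ k = k' := by
  -- the two ends of the scaled segment are at least 5 apart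
  have := s.vertical_or_horizontal
  rw [Prod.ext_iff] at h
  rcases hc with rfl | rfl <;> rcases hc' with rfl | rfl <;>
    simp only [inward_lo, inward_hi, true_and] at h ⊢ <;> unfold dir at h <;>
    split_ifs at h <;> simp [Prod.ext_iff] at h ⊢ <;> omega

theorem mem_scaleTrim_iff {T : ℤ × ℤ → Prop} [DecidablePred T] {z : ℤ × ℤ} :
    z ∈ s.scaleTrim T ↔
      z ∈ s.scaled ∧ ∀ c, s.IsEnd c → T c → z ≠ 5 • c ∧ z ≠ 5 • c + s.inward c := by
  simp only [IsEnd, or_imp, forall_and, forall_eq, inward_lo, inward_hi]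
  simp only [mem_iff, mem_scaled_iff, scaleTrim, Ne, Prod.ext_iff]
  have := s.vertical_or_horizontal
  unfold dir
  by_cases hlo : T s.lo <;> by_cases hhi : T s.hi <;> split_ifs <;> simp [hlo, hhi] <;> omega

theorem mem_ofGridStep_iff {p q z : ℤ × ℤ} {h : GridStep p q} :
    z ∈ ofGridStep p q h ↔ z = p ∨ z = q := by
  unfold GridStep at h
  simp only [mem_iff, ofGridStep, Prod.fst_inf, Prod.snd_inf, Prod.fst_sup, Prod.snd_sup,
    Prod.ext_iff]
  omega

theorem isEnd_ofGridStep {p q z : ℤ × ℤ} {h : GridStep p q} (hz : z ∈ ofGridStep p q h) :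
    (ofGridStep p q h).IsEnd z := by
  rw [mem_ofGridStep_iff] at hz
  unfold GridStep at h
  simp only [IsEnd, ofGridStep, Prod.ext_iff, Prod.fst_inf, Prod.snd_inf, Prod.fst_sup,
    Prod.snd_sup]
  rcases hz with rfl | rfl <;> omega

end GridSegment

section twoSubdivision

variable {V : Type*} {G : SimpleGraph V}

theorem twoSubdivision_not_adj_inl_inl (u v : V) :
    ¬(twoSubdivision G).Adj (.inl u) (.inl v) :=
  fun h => h.2.elim id id

theorem twoSubdivision_adj_inl_inr {u : V} {e : {p : V × V // G.Adj p.1 p.2}} :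
    (twoSubdivision G).Adj (.inl u) (.inr e) ↔ e.1.1 = u :=
  ⟨fun h => h.2.elim id False.elim, fun h => ⟨Sum.inl_ne_inr, .inl h⟩⟩

theorem twoSubdivision_adj_inr_inr {e g : {p : V × V // G.Adj p.1 p.2}} :
    (twoSubdivision G).Adj (.inr e) (.inr g) ↔ e.1.1 = g.1.2 ∧ e.1.2 = g.1.1 := by
  refine ⟨fun h => h.2.elim id fun h' => ⟨h'.2.symm, h'.1.symm⟩, fun h => ⟨?_, .inl h⟩⟩
  intro heq
  cases Sum.inr_injective heq
  exact e.2.ne h.1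

end twoSubdivision

namespace SegmentRep

open GridSegment

variable {V : Type*} {G : SimpleGraph V} (R : SegmentRep G) {a b u v w x : V} {z : ℤ × ℤ}

/-- Junk unless `u` and `v` are adjacent, when it is the common point of their segments. -/
noncomputable def contact (u v : V) : ℤ × ℤ :=
  Classical.epsilon fun z => z ∈ R.seg u ∧ z ∈ R.seg v

variable {R}

theorem contact_mem (h : G.Adj u v) : R.contact u v ∈ R.seg u ∧ R.contact u v ∈ R.seg v :=
  Classical.epsilon_spec ((R.adj_iff u v h.ne).1 h)

theorem eq_contact (huv : u ≠ v) (hu : z ∈ R.seg u) (hv : z ∈ R.seg v) : z = R.contact u v :=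
  R.inter_subsingleton u v huv ⟨hu, hv⟩ (contact_mem ((R.adj_iff u v huv).2 ⟨z, hu, hv⟩))

theorem contact_comm (h : G.Adj u v) : R.contact u v = R.contact v u :=
  eq_contact h.ne.symm (contact_mem h).2 (contact_mem h).1

theorem eq_or_eq_of_mem (htf : G.CliqueFree 3) (huv : u ≠ v) (hu : z ∈ R.seg u)
    (hv : z ∈ R.seg v) (hw : z ∈ R.seg w) : w = u ∨ w = v := by
  classical
  by_contra! h
  have hadj : ∀ {a b}, a ≠ b → z ∈ R.seg a → z ∈ R.seg b → G.Adj a b :=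
    fun hab ha hb => (R.adj_iff _ _ hab).2 ⟨z, ha, hb⟩
  exact htf {u, v, w} (SimpleGraph.is3Clique_triple_iff.2
    ⟨hadj huv hu hv, hadj h.1.symm hu hw, hadj h.2.symm hv hw⟩)

theorem exists_mem_of_mem_scaled (huv : u ≠ v) (hu : z ∈ (R.seg u).scaled)
    (hv : z ∈ (R.seg v).scaled) : ∃ c ∈ R.seg u, c ∈ R.seg v ∧ z = 5 • c :=
  exists_smul_eq_of_mem_scaled (R.inter_subsingleton u v huv) hu hv

variable (R) [LinearOrder V]

/-- The segment of `u` is the one shortened at its contact with `v`. -/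
def Retracts (u v : V) : Prop :=
  (R.seg u).IsEnd (R.contact u v) ∧ ((R.seg v).IsEnd (R.contact u v) → u < v)

def RetractsAt (u : V) (c : ℤ × ℤ) : Prop :=
  ∃ v, G.Adj u v ∧ R.Retracts u v ∧ R.contact u v = c

open scoped Classical in
noncomputable def vertexSeg (u : V) : GridSegment :=
  (R.seg u).scaleTrim (R.RetractsAt u)

noncomputable def nearContact (w x : V) (k : ℤ) : ℤ × ℤ :=
  5 • R.contact w x + k • (R.seg w).inward (R.contact w x)

omit [LinearOrder V] in
theorem gridStep_nearContact (w x : V) (k : ℤ) :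
    GridStep (R.nearContact w x k) (R.nearContact w x (k + 1)) := by
  rw [nearContact, nearContact, add_smul, one_smul, ← add_assoc, gridStep_add_iff]
  exact gridStep_zero_inward _

open scoped Classical in
noncomputable def edgeSeg (a b : V) : GridSegment :=
  if R.Retracts a b then ofGridStep _ _ (R.gridStep_nearContact a b 1)
  else ofGridStep _ _ (R.gridStep_nearContact b a 0)

noncomputable def subdivSeg : SubdivV G → GridSegment
  | .inl u => R.vertexSeg u
  | .inr e => R.edgeSeg e.1.1 e.1.2

variable {R}

theorem retracts_iff_not_retracts (h : G.Adj u v) : R.Retracts u v ↔ ¬R.Retracts v u := by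
  have hend := R.isEnd_of_mem u v h.ne _ (contact_mem h).1 (contact_mem h).2
  unfold Retracts
  rw [← contact_comm h]
  generalize (R.seg u).IsEnd (R.contact u v) = Eu at hend
  generalize (R.seg v).IsEnd (R.contact u v) = Ev at hend
  rcases lt_or_gt_of_ne h.ne with hlt | hlt <;> simp only [hlt, hlt.not_gt] <;> tauto

theorem Retracts.isEnd (h : R.Retracts w x) : (R.seg w).IsEnd (R.contact w x) := h.1

omit [LinearOrder V] in
theorem nearContact_zero : R.nearContact w x 0 = 5 • R.contact w x := by
  simp [nearContact]

omit [LinearOrder V] in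
theorem nearContact_injective : Function.Injective (R.nearContact w x) := fun _ _ h =>
  smul_left_injective ℤ (inward_ne_zero _) (add_left_cancel h)

omit [LinearOrder V] in
theorem nearContact_ne_smul {k : ℤ} (hk₁ : 1 ≤ k) (hk₄ : k ≤ 4) (c : ℤ × ℤ) :
    R.nearContact w x k ≠ 5 • c :=
  add_smul_inward_ne_smul _ c hk₁ hk₄

theorem nearContact_mem_scaled (h : R.Retracts w x) {k : ℤ} (hk₀ : 0 ≤ k) (hk₅ : k ≤ 5) :
    R.nearContact w x k ∈ (R.seg w).scaled :=
  add_smul_inward_mem_scaled h.isEnd hk₀ hk₅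

theorem eq_of_nearContact_eq (h : R.Retracts w x) (h' : R.Retracts w x') {k k' : ℤ}
    (hk₀ : 0 ≤ k) (hk₂ : k ≤ 2) (hk₀' : 0 ≤ k') (hk₂' : k' ≤ 2)
    (heq : R.nearContact w x k = R.nearContact w x' k') :
    R.contact w x = R.contact w x' ∧ k = k' :=
  eq_of_add_smul_inward_eq h.isEnd h'.isEnd hk₀ hk₂ hk₀' hk₂' heq

theorem nearContact_not_mem_scaled (h : R.Retracts w x) (hwu : w ≠ u) {k : ℤ} (hk₁ : 1 ≤ k)
    (hk₄ : k ≤ 4) : R.nearContact w x k ∉ (R.seg u).scaled := fun hu => by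
  obtain ⟨c, -, -, hc⟩ :=
    exists_mem_of_mem_scaled hwu (nearContact_mem_scaled h (by omega) (by omega)) hu
  exact nearContact_ne_smul hk₁ hk₄ c hc

theorem mem_vertexSeg_iff : z ∈ R.vertexSeg u ↔ z ∈ (R.seg u).scaled ∧
    ∀ v, G.Adj u v → R.Retracts u v → z ≠ R.nearContact u v 0 ∧ z ≠ R.nearContact u v 1 := by
  classical
  rw [vertexSeg, mem_scaleTrim_iff]
  refine and_congr_right fun _ => ⟨fun h v hadj hr => ?_, fun h c _ ⟨v, hadj, hr, hc⟩ => ?_⟩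
  · simpa [nearContact] using h _ hr.isEnd ⟨v, hadj, hr, rfl⟩
  · simpa [nearContact, hc] using h v hadj hr

theorem mem_scaled_of_mem_vertexSeg (hz : z ∈ R.vertexSeg u) : z ∈ (R.seg u).scaled :=
  (mem_vertexSeg_iff.1 hz).1

theorem nearContact_not_mem_vertexSeg (hadj : G.Adj u v) (h : R.Retracts u v) {k : ℤ}
    (hk : k = 0 ∨ k = 1) : R.nearContact u v k ∉ R.vertexSeg u := fun hz => by
  have := (mem_vertexSeg_iff.1 hz).2 v hadj h
  rcases hk with rfl | rfl <;> simp at this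

theorem nearContact_two_mem_vertexSeg (h : R.Retracts u v) :
    R.nearContact u v 2 ∈ R.vertexSeg u := by
  refine mem_vertexSeg_iff.2 ⟨nearContact_mem_scaled h (by norm_num) (by norm_num),
    fun v' _ h' => ?_⟩
  have key : ∀ k : ℤ, 0 ≤ k → k ≤ 1 → R.nearContact u v 2 ≠ R.nearContact u v' k :=
    fun k hk₀ hk₁ heq => absurd
      (eq_of_nearContact_eq h h' (by norm_num) (by norm_num) hk₀ (by omega) heq).2 (by omega)
  exact ⟨key 0 le_rfl zero_le_one, key 1 zero_le_one le_rfl⟩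

theorem smul_contact_mem_vertexSeg (htf : G.CliqueFree 3) (hadj : G.Adj u v)
    (h : ¬R.Retracts u v) : 5 • R.contact u v ∈ R.vertexSeg u := by
  refine mem_vertexSeg_iff.2 ⟨smul_mem_scaled (contact_mem hadj).1,
    fun v' hadj' h' => ⟨fun heq => ?_, fun heq => nearContact_ne_smul le_rfl (by norm_num) _
      heq.symm⟩⟩
  rw [nearContact_zero] at heq
  have hc := smul_right_injective (ℤ × ℤ) (by norm_num : (5 : ℕ) ≠ 0) heq
  rcases eq_or_eq_of_mem htf hadj.ne (contact_mem hadj).1 (contact_mem hadj).2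
    (hc ▸ (contact_mem hadj').2) with rfl | rfl
  · exact hadj'.ne rfl
  · exact h h'

theorem mem_edgeSeg_iff (hab : G.Adj a b) : z ∈ R.edgeSeg a b ↔
    R.Retracts a b ∧ (z = R.nearContact a b 1 ∨ z = R.nearContact a b 2) ∨
      R.Retracts b a ∧ (z = R.nearContact b a 0 ∨ z = R.nearContact b a 1) := by
  have hba := retracts_iff_not_retracts (R := R) hab.symm
  unfold edgeSeg
  split_ifs with h <;> simp only [mem_ofGridStep_iff, h, hba, true_and, not_true, false_and,
    or_false, not_false_eq_true, false_or] <;> norm_num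

theorem exists_of_mem_edgeSeg (hab : G.Adj a b) (hz : z ∈ R.edgeSeg a b) :
    ∃ w x k, R.Retracts w x ∧ G.Adj w x ∧ s(w, x) = s(a, b) ∧ 0 ≤ k ∧ k ≤ 2 ∧
      z = R.nearContact w x k := by
  rcases (mem_edgeSeg_iff hab).1 hz with ⟨h, rfl | rfl⟩ | ⟨h, rfl | rfl⟩
  · exact ⟨a, b, 1, h, hab, rfl, by norm_num, by norm_num, rfl⟩
  · exact ⟨a, b, 2, h, hab, rfl, by norm_num, by norm_num, rfl⟩
  · exact ⟨b, a, 0, h, hab.symm, Sym2.eq_swap, le_rfl, by norm_num, rfl⟩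
  · exact ⟨b, a, 1, h, hab.symm, Sym2.eq_swap, by norm_num, by norm_num, rfl⟩

theorem vertexSeg_inter_vertexSeg (huv : u ≠ v) :
    (R.vertexSeg u : Set (ℤ × ℤ)) ∩ R.vertexSeg v = ∅ := by
  refine Set.eq_empty_of_forall_notMem fun z ⟨hu, hv⟩ => ?_
  obtain ⟨c, hcu, hcv, rfl⟩ := exists_mem_of_mem_scaled huv (mem_scaled_of_mem_vertexSeg hu)
    (mem_scaled_of_mem_vertexSeg hv)
  have hadj : G.Adj u v := (R.adj_iff u v huv).2 ⟨c, hcu, hcv⟩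
  by_cases h : R.Retracts u v
  · refine nearContact_not_mem_vertexSeg hadj h (Or.inl rfl) ?_
    rwa [nearContact_zero, ← eq_contact huv hcu hcv]
  · rw [retracts_iff_not_retracts hadj, not_not] at h
    refine nearContact_not_mem_vertexSeg hadj.symm h (Or.inl rfl) ?_
    rwa [nearContact_zero, ← eq_contact huv.symm hcv hcu]

theorem exists_vertexSeg_inter_edgeSeg_eq (htf : G.CliqueFree 3) (hab : G.Adj a b) :
    ∃ z, (R.vertexSeg a : Set (ℤ × ℤ)) ∩ R.edgeSeg a b = {z} := by
  by_cases h : R.Retracts a b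
  · refine ⟨R.nearContact a b 2, Set.eq_singleton_iff_unique_mem.2
      ⟨⟨nearContact_two_mem_vertexSeg h, (mem_edgeSeg_iff hab).2 (.inl ⟨h, .inr rfl⟩)⟩,
        fun z ⟨hza, hze⟩ => ?_⟩⟩
    rcases (mem_edgeSeg_iff hab).1 hze with ⟨-, rfl | rfl⟩ | ⟨h', -⟩
    · exact absurd hza (nearContact_not_mem_vertexSeg hab h (.inr rfl))
    · rfl
    · exact absurd h' ((retracts_iff_not_retracts hab).1 h)
  · have h' : R.Retracts b a := (retracts_iff_not_retracts hab.symm).2 h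
    refine ⟨R.nearContact b a 0, Set.eq_singleton_iff_unique_mem.2
      ⟨⟨?_, (mem_edgeSeg_iff hab).2 (.inr ⟨h', .inl rfl⟩)⟩, fun z ⟨hza, hze⟩ => ?_⟩⟩
    · rw [nearContact_zero, ← contact_comm hab]
      exact smul_contact_mem_vertexSeg htf hab h
    rcases (mem_edgeSeg_iff hab).1 hze with ⟨h'', -⟩ | ⟨-, rfl | rfl⟩
    · exact absurd h'' h
    · rfl
    · exact absurd (mem_scaled_of_mem_vertexSeg hza)
        (nearContact_not_mem_scaled h' hab.ne.symm le_rfl (by norm_num))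

theorem edgeSeg_inter_vertexSeg_of_ne (htf : G.CliqueFree 3) (hab : G.Adj a b) (hua : u ≠ a) :
    (R.edgeSeg a b : Set (ℤ × ℤ)) ∩ R.vertexSeg u = ∅ := by
  refine Set.eq_empty_of_forall_notMem fun z ⟨hze, hzu⟩ => ?_
  have hzu' := mem_scaled_of_mem_vertexSeg hzu
  rcases (mem_edgeSeg_iff hab).1 hze with ⟨h, rfl | rfl⟩ | ⟨h, rfl | rfl⟩
  · exact nearContact_not_mem_scaled h hua.symm le_rfl (by norm_num) hzu'
  · exact nearContact_not_mem_scaled h hua.symm (by norm_num) (by norm_num) hzu'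
  · by_cases hub : u = b
    · subst hub
      exact nearContact_not_mem_vertexSeg hab.symm h (.inl rfl) hzu
    rw [nearContact_zero] at hzu'
    obtain ⟨c, hcu, -, hc⟩ :=
      exists_mem_of_mem_scaled hub hzu' (smul_mem_scaled (contact_mem hab.symm).1)
    rw [← smul_right_injective (ℤ × ℤ) (by norm_num : (5 : ℕ) ≠ 0) hc] at hcu
    rcases eq_or_eq_of_mem htf hab.ne (contact_mem hab.symm).2 (contact_mem hab.symm).1 hcu
      with h | h
    exacts [hua h, hub h]
  · by_cases hub : u = b
    · subst hub
      exact nearContact_not_mem_vertexSeg hab.symm h (.inr rfl) hzu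
    exact nearContact_not_mem_scaled h (Ne.symm hub) le_rfl (by norm_num) hzu'

theorem exists_edgeSeg_inter_edgeSeg_eq (hab : G.Adj a b) :
    ∃ z, (R.edgeSeg a b : Set (ℤ × ℤ)) ∩ R.edgeSeg b a = {z} := by
  wlog h : R.Retracts a b generalizing a b
  · obtain ⟨z, hz⟩ := this hab.symm ((retracts_iff_not_retracts hab.symm).2 h)
    exact ⟨z, Set.inter_comm (R.edgeSeg a b : Set (ℤ × ℤ)) _ ▸ hz⟩
  have h' := (retracts_iff_not_retracts hab).1 h
  refine ⟨R.nearContact a b 1, Set.eq_singleton_iff_unique_mem.2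
    ⟨⟨(mem_edgeSeg_iff hab).2 (.inl ⟨h, .inl rfl⟩),
      (mem_edgeSeg_iff hab.symm).2 (.inr ⟨h, .inr rfl⟩)⟩, fun z ⟨hz, hz'⟩ => ?_⟩⟩
  rcases (mem_edgeSeg_iff hab).1 hz with ⟨-, rfl | rfl⟩ | ⟨h'', -⟩
  · rfl
  · rcases (mem_edgeSeg_iff hab.symm).1 hz' with ⟨h'', -⟩ | ⟨-, heq | heq⟩
    · exact absurd h'' h'
    all_goals exact absurd (nearContact_injective heq) (by norm_num)
  · exact absurd h'' h'

theorem edgeSeg_inter_edgeSeg_of_ne (htf : G.CliqueFree 3) {a' b' : V} (hab : G.Adj a b)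
    (hab' : G.Adj a' b') (hne : s(a, b) ≠ s(a', b')) :
    (R.edgeSeg a b : Set (ℤ × ℤ)) ∩ R.edgeSeg a' b' = ∅ := by
  refine Set.eq_empty_of_forall_notMem fun z ⟨hz, hz'⟩ => ?_
  obtain ⟨w, x, k, h, hwx, hs, hk₀, hk₂, rfl⟩ := exists_of_mem_edgeSeg hab hz
  obtain ⟨w', x', k', h', hwx', hs', hk₀', hk₂', heq⟩ := exists_of_mem_edgeSeg hab' hz'
  rw [← hs, ← hs'] at hne
  by_cases hww : w = w'
  · subst hww
    obtain ⟨hc, -⟩ := eq_of_nearContact_eq h h' hk₀ hk₂ hk₀' hk₂' heq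
    rcases eq_or_eq_of_mem htf hwx.ne (contact_mem hwx).1 (contact_mem hwx).2
      (hc ▸ (contact_mem hwx').2) with rfl | rfl
    · exact hwx'.ne rfl
    · exact hne rfl
  obtain ⟨c, hcw, hcw', hc⟩ := exists_mem_of_mem_scaled hww
    (nearContact_mem_scaled h hk₀ (by omega)) (heq ▸ nearContact_mem_scaled h' hk₀' (by omega))
  obtain rfl : k = 0 := by
    by_contra hk
    exact nearContact_ne_smul (by omega) (by omega) c hc
  obtain rfl : k' = 0 := by
    by_contra hk
    exact nearContact_ne_smul (by omega) (by omega) c (heq ▸ hc)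
  have hinj := smul_right_injective (ℤ × ℤ) (by norm_num : (5 : ℕ) ≠ 0)
  have hcx : R.contact w x = c := hinj (nearContact_zero.symm.trans hc)
  have hcx' : R.contact w' x' = c := hinj (nearContact_zero.symm.trans (heq ▸ hc))
  have hx : w' = x := ((eq_or_eq_of_mem htf hwx.ne (hcx ▸ (contact_mem hwx).1)
    (hcx ▸ (contact_mem hwx).2) hcw').resolve_left (Ne.symm hww))
  have hx' : w = x' := ((eq_or_eq_of_mem htf hwx'.ne (hcx' ▸ (contact_mem hwx').1)
    (hcx' ▸ (contact_mem hwx').2) hcw).resolve_left hww)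
  exact hne (by rw [hx, ← hx']; exact Sym2.eq_swap)


theorem isEnd_of_mem_edgeSeg {a b : V} {z : ℤ × ℤ} (hz : z ∈ R.edgeSeg a b) :
    (R.edgeSeg a b).IsEnd z := by
  unfold edgeSeg at hz ⊢
  split_ifs at hz ⊢ <;> exact GridSegment.isEnd_ofGridStep hz

theorem exists_subdivSeg_inter_eq (htf : G.CliqueFree 3) {w₁ w₂ : SubdivV G}
    (h : (twoSubdivision G).Adj w₁ w₂) :
    ∃ z, (R.subdivSeg w₁ : Set (ℤ × ℤ)) ∩ R.subdivSeg w₂ = {z} := by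
  rcases w₁ with u | ⟨⟨a, b⟩, hab⟩ <;> rcases w₂ with v | ⟨⟨a', b'⟩, hab'⟩
  · exact absurd h (twoSubdivision_not_adj_inl_inl u v)
  · obtain rfl : a' = u := twoSubdivision_adj_inl_inr.1 h
    exact exists_vertexSeg_inter_edgeSeg_eq htf hab'
  · obtain rfl : a = v := twoSubdivision_adj_inl_inr.1 h.symm
    obtain ⟨z, hz⟩ := exists_vertexSeg_inter_edgeSeg_eq (R := R) htf hab
    exact ⟨z, Set.inter_comm (R.vertexSeg a : Set (ℤ × ℤ)) _ ▸ hz⟩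
  · obtain ⟨rfl, rfl⟩ := twoSubdivision_adj_inr_inr.1 h
    exact exists_edgeSeg_inter_edgeSeg_eq hab

theorem subdivSeg_inter_eq_empty (htf : G.CliqueFree 3) {w₁ w₂ : SubdivV G} (hne : w₁ ≠ w₂)
    (h : ¬(twoSubdivision G).Adj w₁ w₂) :
    (R.subdivSeg w₁ : Set (ℤ × ℤ)) ∩ R.subdivSeg w₂ = ∅ := by
  rcases w₁ with u | ⟨⟨a, b⟩, hab⟩ <;> rcases w₂ with v | ⟨⟨a', b'⟩, hab'⟩
  · exact vertexSeg_inter_vertexSeg fun huv => hne (congrArg _ huv)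
  · rw [Set.inter_comm]
    exact edgeSeg_inter_vertexSeg_of_ne htf hab' fun hu => h (twoSubdivision_adj_inl_inr.2 hu.symm)
  · exact edgeSeg_inter_vertexSeg_of_ne htf hab
      fun hv => h (twoSubdivision_adj_inl_inr.2 hv.symm).symm
  · refine edgeSeg_inter_edgeSeg_of_ne htf hab hab' fun hs => ?_
    rcases Sym2.eq_iff.1 hs with ⟨rfl, rfl⟩ | ⟨rfl, rfl⟩
    · exact hne rfl
    · exact h (twoSubdivision_adj_inr_inr.2 ⟨rfl, rfl⟩)

theorem isEnd_of_mem_subdivSeg {w₁ w₂ : SubdivV G} (hne : w₁ ≠ w₂) {z : ℤ × ℤ}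
    (h₁ : z ∈ R.subdivSeg w₁) (h₂ : z ∈ R.subdivSeg w₂) :
    (R.subdivSeg w₁).IsEnd z ∨ (R.subdivSeg w₂).IsEnd z := by
  rcases w₁ with u | e
  · rcases w₂ with v | e
    · exact absurd (vertexSeg_inter_vertexSeg (R := R) fun huv => hne (congrArg _ huv))
        (Set.nonempty_iff_ne_empty.1 ⟨z, h₁, h₂⟩)
    · exact .inr (isEnd_of_mem_edgeSeg h₂)
  · exact .inl (isEnd_of_mem_edgeSeg h₁)

noncomputable def toTwoSubdivision (R : SegmentRep G) (htf : G.CliqueFree 3) :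
    SegmentRep (twoSubdivision G) :=
  ofInter R.subdivSeg (fun _ _ => exists_subdivSeg_inter_eq htf)
    (fun _ _ => subdivSeg_inter_eq_empty htf) (fun _ _ => isEnd_of_mem_subdivSeg)

end SegmentRep

theorem twoSubdivision_is_B0_CPG_general (V : Type) (G : SimpleGraph V)
    (htf : G.CliqueFree 3) (hG : IsBkCPG G 0) :
    IsBkCPG (twoSubdivision G) 0 := by
  let _ := IsWellOrder.linearOrder (WellOrderingRel (α := V))
  obtain ⟨R⟩ := isBkCPG_zero_iff.1 hG
  exact isBkCPG_zero_iff.2 ⟨R.toTwoSubdivision htf⟩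

/-- If `G` is a triangle-free finite graph of maximum degree at most 3 admitting a 0-bend
CPG representation, then its 2-subdivision also admits a 0-bend CPG representation. -/
theorem twoSubdivision_is_B0_CPG (V : Type) [Fintype V] (G : SimpleGraph V)
    (htf : G.CliqueFree 3) (hdeg : ∀ v : V, (G.neighborSet v).ncard ≤ 3)
    (hG : IsBkCPG G 0) :
    IsBkCPG (twoSubdivision G) 0 :=
  twoSubdivision_is_B0_CPG_general V G htf hG
end
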